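/- arXiv:2510.07560 — 3 statements merged into one kernel-verified Lean document; each statement's English description precedes it below -/
import Mathlib

section
/- Let I ⊆ ℂ[Mat_{m,n}] be an L_𝐈×L_𝐉-stable ideal, ≺ a term order, and suppose that for every (𝐈,𝐉)-admissible bicrystal operator φ a test set 𝓜(I,≺,φ) for (I,≺,φ) is given. Then I is (𝐈,𝐉,≺)-bicrystalline if and only if for every admissible φ and every N ∈ 𝓜(I,≺,φ) one has φ(N) ∈ Mat_≺ I ∪ {∅}. -/
namespace GCS

/-- Given a labelled word whose letter `cl` plays the role of a closing bracket `)` and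
whose letter `op` plays the role of an opening bracket `(`, with `o` the number of currently
unmatched opening brackets seen so far, return the label of the rightmost unmatched
closing bracket (or `none` if every closing bracket is matched). -/
def lastUnmatched {β : Type} (cl op : ℕ) : List (ℕ × β) → ℕ → Option β
  | [], _ => none
  | (a, lbl) :: rest, o =>
    if a = cl then
      if o = 0 then
        match lastUnmatched cl op rest 0 with
        | some x => some x
        | none => some lbl
      else lastUnmatched cl op rest (o - 1)
    else if a = op then lastUnmatched cl op rest (o + 1)
    else lastUnmatched cl op rest o

variable {m n : ℕ}

/-- The labelled row word of a matrix of nonnegative integers: read the columns left to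
right, each column top to bottom, recording `M r c` copies of the (1-based) row index
`r + 1`, each labelled by its column `c`. -/
def rowWordLbl (M : Matrix (Fin m) (Fin n) ℕ) : List (ℕ × Fin n) :=
  (List.finRange n).flatMap fun c =>
    (List.finRange m).flatMap fun r => List.replicate (M r c) (r.1 + 1, c)

/-- The row word `row(M)` (letters are 1-based row indices). -/
def rowWord (M : Matrix (Fin m) (Fin n) ℕ) : List ℕ := (rowWordLbl M).map Prod.fst

/-- The column word `col(M) = row(Mᵀ)`. -/
def colWord (M : Matrix (Fin m) (Fin n) ℕ) : List ℕ := rowWord M.transpose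

/-- The lowering bicrystal operator `f_i^row` (here `i` is the 1-based row index,
`1 ≤ i ≤ m - 1`): locate the rightmost unmatched `)` in `bracket_i(row(M))`, coming from an
entry in row `i` and some column `c`; decrease that entry by one and increase the entry of
row `i+1`, column `c` by one.  Returns `none` if every `)` is matched. -/
def frow (i : ℕ) (M : Matrix (Fin m) (Fin n) ℕ) : Option (Matrix (Fin m) (Fin n) ℕ) :=
  (lastUnmatched i (i + 1) (rowWordLbl M) 0).map fun c =>
    Matrix.of fun a b =>
      if a.1 + 1 = i ∧ b = c then M a b - 1
      else if a.1 + 1 = i + 1 ∧ b = c then M a b + 1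
      else M a b

/-- The raising bicrystal operator `e_i^row`: locate the leftmost unmatched `(` in
`bracket_i(row(M))`, coming from an entry in row `i+1` and some column `c`; decrease that
entry by one and increase the entry of row `i`, column `c` by one. -/
def erow (i : ℕ) (M : Matrix (Fin m) (Fin n) ℕ) : Option (Matrix (Fin m) (Fin n) ℕ) :=
  (lastUnmatched (i + 1) i (rowWordLbl M).reverse 0).map fun c =>
    Matrix.of fun a b =>
      if a.1 + 1 = i + 1 ∧ b = c then M a b - 1
      else if a.1 + 1 = i ∧ b = c then M a b + 1
      else M a b

/-- `f_j^col(M) = (f_j^row(Mᵀ))ᵀ`. -/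
def fcol (j : ℕ) (M : Matrix (Fin m) (Fin n) ℕ) : Option (Matrix (Fin m) (Fin n) ℕ) :=
  (frow j M.transpose).map Matrix.transpose

/-- `e_j^col(M) = (e_j^row(Mᵀ))ᵀ`. -/
def ecol (j : ℕ) (M : Matrix (Fin m) (Fin n) ℕ) : Option (Matrix (Fin m) (Fin n) ℕ) :=
  (erow j M.transpose).map Matrix.transpose

/-- `I` is (the set of cut indices of) a Levi datum for size `m`:
`I = {0 = i_0 < i_1 < ⋯ < i_r = m}`. -/
def IsLeviDatum (m : ℕ) (I : Finset ℕ) : Prop := 0 ∈ I ∧ m ∈ I ∧ ∀ x ∈ I, x ≤ m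

/-- The admissible bicrystal operators for the Levi datum `(𝐈, 𝐉)` are
`f_i^row, e_i^row` for `i ∉ 𝐈` and `f_j^col, e_j^col` for `j ∉ 𝐉`. -/
def AdmissibleOp (m n : ℕ) (I J : Finset ℕ)
    (φ : Matrix (Fin m) (Fin n) ℕ → Option (Matrix (Fin m) (Fin n) ℕ)) : Prop :=
  (∃ i, 0 < i ∧ i < m ∧ i ∉ I ∧ (φ = frow i ∨ φ = erow i)) ∨
  (∃ j, 0 < j ∧ j < n ∧ j ∉ J ∧ (φ = fcol j ∨ φ = ecol j))

/-- A set `S` of exponent matrices is `(𝐈,𝐉)`-bicrystal closed if `φ(M) ∈ S ∪ {∅}` for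
every admissible operator `φ` and every `M ∈ S`. -/
def BicrystalClosed (m n : ℕ) (I J : Finset ℕ) (S : Set (Matrix (Fin m) (Fin n) ℕ)) : Prop :=
  ∀ φ, AdmissibleOp m n I J φ → ∀ M ∈ S, ∀ N, φ M = some N → N ∈ S

/-- A term order on monomials in variables indexed by `σ`: a linear order on exponent
vectors compatible with addition and having `0` (i.e. the monomial `1`) as minimum. -/
structure TermOrder (σ : Type) where
  le : (σ →₀ ℕ) → (σ →₀ ℕ) → Prop
  le_refl : ∀ u, le u u
  le_trans : ∀ u v w, le u v → le v w → le u w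
  le_antisymm : ∀ u v, le u v → le v u → u = v
  le_total : ∀ u v, le u v ∨ le v u
  add_le_add : ∀ u v w, le u v → le (u + w) (v + w)
  zero_le : ∀ u, le 0 u

/-- `u` is the exponent vector of the initial term `init_≺ f`: it lies in the support of
`f` and is `≺`-largest among the monomials of `f`.  (If `f = 0`, no `u` satisfies this.) -/
def IsInitExp {σ : Type} (ord : TermOrder σ) (f : MvPolynomial σ ℂ) (u : σ →₀ ℕ) : Prop :=
  u ∈ f.support ∧ ∀ v ∈ f.support, ord.le v u

/-- The initial ideal `init_≺ I = ⟨init_≺ f : f ∈ I, f ≠ 0⟩`. -/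
noncomputable def initialIdeal {σ : Type} (ord : TermOrder σ) (I : Ideal (MvPolynomial σ ℂ)) :
    Ideal (MvPolynomial σ ℂ) :=
  Ideal.span {p | ∃ f ∈ I, ∃ u, IsInitExp ord f u ∧ p = MvPolynomial.monomial u (1 : ℂ)}

/-- The exponent vector of the monomial `z^M` attached to the matrix `M`. -/
noncomputable def expOf (M : Matrix (Fin m) (Fin n) ℕ) : (Fin m × Fin n) →₀ ℕ :=
  Finsupp.equivFunOnFinite.symm fun p => M p.1 p.2

/-- `Mat_≺ I`, the set of exponent matrices of monomials lying in `init_≺ I`. -/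
def matLT (ord : TermOrder (Fin m × Fin n)) (I : Ideal (MvPolynomial (Fin m × Fin n) ℂ)) :
    Set (Matrix (Fin m) (Fin n) ℕ) :=
  {M | MvPolynomial.monomial (expOf M) (1 : ℂ) ∈ initialIdeal ord I}

/-- Indices `a`, `b` (0-based) lie in the same diagonal block determined by the cuts `I`. -/
def SameBlock (I : Finset ℕ) (a b : ℕ) : Prop := ∀ i ∈ I, (a < i ↔ b < i)

/-- `g` belongs to the block-diagonal Levi subgroup `L_𝐈 ≤ GL_m`: `g` is invertible and
vanishes outside the diagonal blocks cut out by `I`. -/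
def InLevi {m : ℕ} (I : Finset ℕ) (g : Matrix (Fin m) (Fin m) ℂ) : Prop :=
  IsUnit g ∧ ∀ a b : Fin m, ¬ SameBlock I a.1 b.1 → g a b = 0

/-- The action of the pair `(g, h)` on `ℂ[Mat_{m,n}]`: `((g,h)·f)(Z) = f(g Z hᵀ)`,
i.e. the substitution `z_{ab} ↦ ∑_{c,d} g_{ac} h_{bd} z_{cd}`. -/
noncomputable def leviAct (g : Matrix (Fin m) (Fin m) ℂ) (h : Matrix (Fin n) (Fin n) ℂ) :
    MvPolynomial (Fin m × Fin n) ℂ →ₐ[ℂ] MvPolynomial (Fin m × Fin n) ℂ :=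
  MvPolynomial.aeval fun p => ∑ c : Fin m, ∑ d : Fin n,
    MvPolynomial.C (g p.1 c * h p.2 d) * MvPolynomial.X (c, d)

/-- The ideal `Idl` is stable under the action of `L_𝐈 × L_𝐉`. -/
def LeviStable (I J : Finset ℕ) (Idl : Ideal (MvPolynomial (Fin m × Fin n) ℂ)) : Prop :=
  ∀ g h, InLevi I g → InLevi J h → ∀ f ∈ Idl, leviAct g h f ∈ Idl

/-- An `L_𝐈 × L_𝐉`-stable ideal `Idl` is `(𝐈,𝐉,≺)`-bicrystalline: the set of exponent
matrices of the standard monomials (monomials not in `init_≺ Idl`) is bicrystal closed. -/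
def IsBicrystalline (m n : ℕ) (I J : Finset ℕ) (ord : TermOrder (Fin m × Fin n))
    (Idl : Ideal (MvPolynomial (Fin m × Fin n) ℂ)) : Prop :=
  LeviStable I J Idl ∧ BicrystalClosed m n I J {M | M ∉ matLT ord Idl}

/-- `z^a` divides `z^b` entrywise, both optional values being defined. -/
def OptDvd (x y : Option (Matrix (Fin m) (Fin n) ℕ)) : Prop :=
  ∃ a b, x = some a ∧ y = some b ∧ ∀ p q, a p q ≤ b p q

/-- `T` is a test set for `(Idl, ≺, φ)`: a finite subset of `Mat_≺ Idl` such that for every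
`M ∈ Mat_≺ Idl` with `φ(M) ≠ ∅` there is `N ∈ T` with `φ(N) ≠ ∅`, `z^N ∣ z^M` and
`z^{φ(N)} ∣ z^{φ(M)}`. -/
def IsTestSet (ord : TermOrder (Fin m × Fin n)) (Idl : Ideal (MvPolynomial (Fin m × Fin n) ℂ))
    (φ : Matrix (Fin m) (Fin n) ℕ → Option (Matrix (Fin m) (Fin n) ℕ))
    (T : Set (Matrix (Fin m) (Fin n) ℕ)) : Prop :=
  T.Finite ∧ T ⊆ matLT ord Idl ∧
  ∀ M ∈ matLT ord Idl, (∃ M', φ M = some M') →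
    ∃ N ∈ T, (∀ p q, N p q ≤ M p q) ∧ OptDvd (φ N) (φ M)

/-- `T` is a test set that is minimal with respect to containment among all test sets. -/
def MinimalTestSet (ord : TermOrder (Fin m × Fin n))
    (Idl : Ideal (MvPolynomial (Fin m × Fin n) ℂ))
    (φ : Matrix (Fin m) (Fin n) ℕ → Option (Matrix (Fin m) (Fin n) ℕ))
    (T : Set (Matrix (Fin m) (Fin n) ℕ)) : Prop :=
  IsTestSet ord Idl φ T ∧ ∀ T', IsTestSet ord Idl φ T' → T' ⊆ T → T' = T

/-- The entry of `M` in 1-based row `r` and column `c` (0 outside the matrix). -/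
def entRow (M : Matrix (Fin m) (Fin n) ℕ) (r : ℕ) (c : Fin n) : ℕ :=
  if h : 1 ≤ r ∧ r ≤ m then M ⟨r - 1, by omega⟩ c else 0

/-- The generic `d × d` minor of `Z` with row set `r` and column set `c`. -/
noncomputable def genMinor (m n d : ℕ) (r : Fin d → Fin m) (c : Fin d → Fin n) :
    MvPolynomial (Fin m × Fin n) ℂ :=
  (Matrix.of fun i j : Fin d => MvPolynomial.X (r i, c j)).det

/-- The exponent vector of the antidiagonal term of the minor with rows `r`, columns `c`. -/
noncomputable def antidiagExp (m n d : ℕ) (r : Fin d → Fin m) (c : Fin d → Fin n) :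
    (Fin m × Fin n) →₀ ℕ :=
  ∑ i : Fin d, Finsupp.single (r i, c i.rev) 1

/-- `ord` is an antidiagonal term order: the lead term of every minor of the generic
matrix `Z` is its antidiagonal term. -/
def IsAntidiagonalOrder (m n : ℕ) (ord : TermOrder (Fin m × Fin n)) : Prop :=
  ∀ d, 0 < d → ∀ (r : Fin d → Fin m) (c : Fin d → Fin n), StrictMono r → StrictMono c →
    IsInitExp ord (genMinor m n d r c) (antidiagExp m n d r c)

/-- All `d × d` minors of the contiguous submatrix `[a,a'] × [b,b']` of `Z`
(1-based bounds). -/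
def minorsOfSub (m n : ℕ) (a a' b b' d : ℕ) : Set (MvPolynomial (Fin m × Fin n) ℂ) :=
  {p | ∃ (r : Fin d → Fin m) (c : Fin d → Fin n), StrictMono r ∧ StrictMono c ∧
    (∀ i, a ≤ (r i).1 + 1 ∧ (r i).1 + 1 ≤ a') ∧
    (∀ j, b ≤ (c j).1 + 1 ∧ (c j).1 + 1 ≤ b') ∧ p = genMinor m n d r c}

/-- `G` is a Gröbner basis of `Idl` with respect to `ord`:
`G ⊆ Idl` and `init_≺ Idl = ⟨init_≺ g : g ∈ G⟩`. -/
def IsGroebnerBasis (ord : TermOrder (Fin m × Fin n))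
    (Idl : Ideal (MvPolynomial (Fin m × Fin n) ℂ))
    (G : Set (MvPolynomial (Fin m × Fin n) ℂ)) : Prop :=
  G ⊆ (Idl : Set (MvPolynomial (Fin m × Fin n) ℂ)) ∧
  initialIdeal ord Idl =
    Ideal.span {p | ∃ g ∈ G, ∃ u, IsInitExp ord g u ∧ p = MvPolynomial.monomial u (1 : ℂ)}

/-- The priority of the variable `z_{ij}` in the variable order
`z_{1n} ≻ z_{1,n-1} ≻ ⋯ ≻ z_{11} ≻ z_{2n} ≻ ⋯ ≻ z_{m1}` (smaller rank = larger variable). -/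
def lexRank (m n : ℕ) (p : Fin m × Fin n) : ℕ := p.1.1 * n + (n - 1 - p.2.1)

/-- `ord` is the (antidiagonal) lexicographic term order determined by the variable order
`z_{1n} ≻ z_{1,n-1} ≻ ⋯ ≻ z_{11} ≻ z_{2n} ≻ ⋯ ≻ z_{m1}`. -/
def IsAntidiagLex (m n : ℕ) (ord : TermOrder (Fin m × Fin n)) : Prop :=
  ∀ u v, ord.le u v ↔
    u = v ∨ ∃ p, u p < v p ∧ ∀ q, lexRank m n q < lexRank m n p → u q = v q

/-- The rank function `r_v(i,j) = #{k ≤ i : v(k) ≤ j}` (1-based), at 0-based `(i,j)`. -/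
def rankP (N : ℕ) (v : Equiv.Perm (Fin N)) (i j : Fin N) : ℕ :=
  (Finset.univ.filter fun k : Fin N => k ≤ i ∧ v k ≤ j).card

/-- The antidiagonal drift `drift_v(i,j) = i + j - 1 - r_v(i,j)` (1-based), at 0-based
`(i,j)`. -/
def driftP (N : ℕ) (v : Equiv.Perm (Fin N)) (i j : Fin N) : ℕ :=
  i.1 + j.1 + 1 - rankP N v i j

/-- The specialized matrix `Z_v`: ones on the permutation positions, zeros southwest-ward
of them (positions `(i,j)` with `j > v(i)` or `i > v⁻¹(j)`), variables elsewhere. -/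
noncomputable def Zv (N : ℕ) (v : Equiv.Perm (Fin N)) :
    Matrix (Fin N) (Fin N) (MvPolynomial (Fin N × Fin N) ℂ) :=
  Matrix.of fun i j =>
    if v i = j then 1 else if v i < j ∨ v.symm j < i then 0 else MvPolynomial.X (i, j)

/-- The `k`-th basic minor `Δ_v^{(k)}`: the determinant of the northwest-justified
`k × k` submatrix of `Z_v`. -/
noncomputable def basicMinor (N k : ℕ) (hk : k ≤ N) (v : Equiv.Perm (Fin N)) :
    MvPolynomial (Fin N × Fin N) ℂ :=
  (Matrix.of fun i j : Fin k => Zv N v (Fin.castLE hk i) (Fin.castLE hk j)).det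

/-- The one-coordinate index-deletion map underlying `φ_{i,j}`: delete the index `i`
from `[n+1]`, renumbering the indices above `i` down by one. -/
def delIdx {N : ℕ} (i a : Fin (N + 1)) (h : a ≠ i) : Fin N :=
  if hlt : a.1 < i.1 then ⟨a.1, by have := i.isLt; omega⟩
  else ⟨a.1 - 1, by
    have h1 := a.isLt
    have h2 : a.1 ≠ i.1 := fun hh => h (Fin.ext hh)
    omega⟩

/-- Row insertion `T ← x` for a tableau given as its list of rows (top to bottom). -/
def rowInsert : List (List ℕ) → ℕ → List (List ℕ)
  | [], x => [[x]]
  | row :: rest, x =>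
    match row.findIdx? (fun y => decide (x < y)) with
    | none => (row ++ [x]) :: rest
    | some k => (row.set k x) :: rowInsert rest (row.getD k 0)

/-- The insertion tableau `tab(w)` of a word `w`. -/
def tab (w : List ℕ) : List (List ℕ) := w.foldl rowInsert []

/-- The `RSK` correspondence: `RSK(M) = (tab(row(M)), tab(col(M)))`. -/
def RSKmap (M : Matrix (Fin m) (Fin n) ℕ) : List (List ℕ) × List (List ℕ) :=
  (tab (rowWord M), tab (colWord M))

/-- The column reading word of a tableau, with each letter labelled by its box `(row, col)`:
entries are read along columns bottom-to-top, left-to-right. -/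
def tabWordLbl (T : List (List ℕ)) : List (ℕ × (ℕ × ℕ)) :=
  (List.range (T.getD 0 []).length).flatMap fun j =>
    ((List.range T.length).reverse).filterMap fun r =>
      ((T.getD r [])[j]?).map fun x => (x, (r, j))

/-- The column reading word `word(T)` (columns bottom-to-top, left-to-right). -/
def tabWord (T : List (List ℕ)) : List ℕ := (tabWordLbl T).map Prod.fst

/-- Replace the entry of `T` in box `(r, j)` by `v`. -/
def setBox (T : List (List ℕ)) (r j v : ℕ) : List (List ℕ) :=
  T.set r ((T.getD r []).set j v)

/-- The tableau crystal lowering operator `f_i`: change the `i` of `T` corresponding to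
the rightmost unmatched `)` of `bracket_i(word(T))` into an `i + 1` (or `∅`). -/
def fTab (i : ℕ) (T : List (List ℕ)) : Option (List (List ℕ)) :=
  (lastUnmatched i (i + 1) (tabWordLbl T) 0).map fun p => setBox T p.1 p.2 (i + 1)

/-- The tableau crystal raising operator `e_i`: change the `i + 1` of `T` corresponding to
the leftmost unmatched `(` of `bracket_i(word(T))` into an `i` (or `∅`). -/
def eTab (i : ℕ) (T : List (List ℕ)) : Option (List (List ℕ)) :=
  (lastUnmatched (i + 1) i (tabWordLbl T).reverse 0).map fun p => setBox T p.1 p.2 i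

/-- `T` (a list of rows, top to bottom) is a semistandard Young tableau with positive
integer entries. -/
def IsSSYT (T : List (List ℕ)) : Prop :=
  (∀ r ∈ T, r ≠ []) ∧
  (∀ r ∈ T, List.Chain' (· ≤ ·) r) ∧
  (∀ i, (T.getD (i + 1) []).length ≤ (T.getD i []).length) ∧
  (∀ i j, j < (T.getD (i + 1) []).length →
    (T.getD i []).getD j 0 < (T.getD (i + 1) []).getD j 0) ∧
  (∀ r ∈ T, ∀ x ∈ r, 1 ≤ x)

/-- `w` is `[a,b]`-ballot: every initial segment contains at least as many `i`s as
`(i+1)`s, for each `i ∈ [a, b-1]`. -/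
def IsBallot (a b : ℕ) (w : List ℕ) : Prop :=
  ∀ k i, a ≤ i → i + 1 ≤ b → (w.take k).count (i + 1) ≤ (w.take k).count i

/-- `T` is an `[a,b]`-Littlewood–Richardson tableau: `revword(T)|_{[a,b]}` is
`[a,b]`-ballot. -/
def IsLRInterval (a b : ℕ) (T : List (List ℕ)) : Prop :=
  IsBallot a b (((tabWord T).reverse).filter fun x => decide (a ≤ x ∧ x ≤ b))

/-- `T` is `𝐊`-LR for `𝐊 = {0 = k_0 < ⋯ < k_t = ℓ}`: `T` is `[k_{α-1}+1, k_α]`-LR for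
every pair of consecutive elements of `𝐊`. -/
def IsKLR (K : Finset ℕ) (T : List (List ℕ)) : Prop :=
  ∀ a b, a ∈ K → b ∈ K → a < b → (∀ x ∈ K, ¬(a < x ∧ x < b)) → IsLRInterval (a + 1) b T

/-- The `[a,b]`-width of a word: the maximum length of a strictly decreasing subsequence
of the restriction `u|_{[a,b]}`. -/
noncomputable def widthInterval (a b : ℕ) (u : List ℕ) : ℕ :=
  sSup {d | ∃ s : List ℕ, s.Sublist (u.filter fun x => decide (a ≤ x ∧ x ≤ b)) ∧
    List.Chain' (· > ·) s ∧ s.length = d}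

/-- The entry of `T` in box `p = (row, col)`. -/
def tabEntry (T : List (List ℕ)) (p : ℕ × ℕ) : ℕ := (T.getD p.1 []).getD p.2 0

/-- The `[a,b]`-width of a tableau: the maximum length of an `[a,b]`-antidiagonal, i.e. a
sequence of boxes of `T` from distinct rows with entries in `[a,b]`, each box weakly east
and strictly north of the previous one, whose entries strictly decrease read bottom to
top. -/
noncomputable def tabWidth (a b : ℕ) (T : List (List ℕ)) : ℕ :=
  sSup {d | ∃ L : List (ℕ × ℕ),
    (∀ p ∈ L, p.1 < T.length ∧ p.2 < (T.getD p.1 []).length ∧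
      a ≤ tabEntry T p ∧ tabEntry T p ≤ b) ∧
    List.Chain' (fun p q => q.1 < p.1 ∧ p.2 ≤ q.2 ∧ tabEntry T q < tabEntry T p) L ∧
    L.length = d}

/-- The maximum length of a sequence of nonzero entries of `M` in antidiagonal position
(row indices strictly decreasing, column indices strictly increasing along the sequence)
with all (1-based) row indices in `[a,b]`. -/
noncomputable def rowAntidiagWidth (a b : ℕ) (M : Matrix (Fin m) (Fin n) ℕ) : ℕ :=
  sSup {d | ∃ L : List (Fin m × Fin n),
    (∀ p ∈ L, M p.1 p.2 ≠ 0 ∧ a ≤ p.1.1 + 1 ∧ p.1.1 + 1 ≤ b) ∧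
    List.Chain' (fun p q => q.1 < p.1 ∧ p.2 < q.2) L ∧
    L.length = d}

/-- As `rowAntidiagWidth`, but with all (1-based) column indices in `[a,b]`. -/
noncomputable def colAntidiagWidth (a b : ℕ) (M : Matrix (Fin m) (Fin n) ℕ) : ℕ :=
  sSup {d | ∃ L : List (Fin m × Fin n),
    (∀ p ∈ L, M p.1 p.2 ≠ 0 ∧ a ≤ p.2.1 + 1 ∧ p.2.1 + 1 ≤ b) ∧
    List.Chain' (fun p q => q.1 < p.1 ∧ p.2 < q.2) L ∧
    L.length = d}

/-- An elementary Knuth transformation: `prq ≡ rpq` for `p ≤ q < r`, and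
`qpr ≡ qrp` for `p < q ≤ r`. -/
inductive KnuthStep : List ℕ → List ℕ → Prop
  | swap1 (u v : List ℕ) (p q r : ℕ) (h1 : p ≤ q) (h2 : q < r) :
      KnuthStep (u ++ p :: r :: q :: v) (u ++ r :: p :: q :: v)
  | swap2 (u v : List ℕ) (p q r : ℕ) (h1 : p < q) (h2 : q ≤ r) :
      KnuthStep (u ++ q :: p :: r :: v) (u ++ q :: r :: p :: v)

/-- Knuth equivalence of words. -/
def KnuthEquiv : List ℕ → List ℕ → Prop := Relation.EqvGen KnuthStep

variable {β : Type}

/-- number of unmatched closers -/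
def uc (cl op : ℕ) : List (ℕ × β) → ℕ
  | [] => 0
  | (a, _) :: r => if a = cl then uc cl op r + 1 else if a = op then uc cl op r - 1 else uc cl op r

/-- number of unmatched openers -/
def uo (cl op : ℕ) : List (ℕ × β) → ℕ
  | [] => 0
  | (a, _) :: r => if a = op then (if uc cl op r = 0 then uo cl op r + 1 else uo cl op r) else uo cl op r

theorem uc_nil (cl op : ℕ) : uc cl op ([] : List (ℕ × β)) = 0 := rfl
theorem uo_nil (cl op : ℕ) : uo cl op ([] : List (ℕ × β)) = 0 := rfl

theorem uc_cons_cl {cl op a : ℕ} (h : a = cl) (l : β) (r : List (ℕ × β)) :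
    uc cl op ((a, l) :: r) = uc cl op r + 1 := by simp [uc, h]

theorem uc_cons_op {cl op a : ℕ} (hco : cl ≠ op) (h : a = op) (l : β) (r : List (ℕ × β)) :
    uc cl op ((a, l) :: r) = uc cl op r - 1 := by
  subst h; simp [uc, if_neg (Ne.symm hco)]

theorem uc_cons_other {cl op a : ℕ} (ha : a ≠ cl) (hb : a ≠ op) (l : β) (r : List (ℕ × β)) :
    uc cl op ((a, l) :: r) = uc cl op r := by simp [uc, ha, hb]

theorem uo_cons_cl {cl op a : ℕ} (hco : cl ≠ op) (h : a = cl) (l : β) (r : List (ℕ × β)) :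
    uo cl op ((a, l) :: r) = uo cl op r := by subst h; simp [uo, hco]

theorem uo_cons_op {cl op a : ℕ} (h : a = op) (l : β) (r : List (ℕ × β)) :
    uo cl op ((a, l) :: r) = if uc cl op r = 0 then uo cl op r + 1 else uo cl op r := by
  simp [uo, h]

theorem uo_cons_other {cl op a : ℕ} (ha : a ≠ cl) (hb : a ≠ op) (l : β) (r : List (ℕ × β)) :
    uo cl op ((a, l) :: r) = uo cl op r := by simp [uo, ha, hb]

theorem uc_uo_append (cl op : ℕ) (hco : cl ≠ op) (L1 L2 : List (ℕ × β)) :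
    uc cl op (L1 ++ L2) = uc cl op L1 + (uc cl op L2 - uo cl op L1) ∧
    uo cl op (L1 ++ L2) = uo cl op L2 + (uo cl op L1 - uc cl op L2) := by
  induction L1 with
  | nil => simp [uc_nil, uo_nil]
  | cons x L1 ih =>
    obtain ⟨a, lbl⟩ := x
    obtain ⟨ih1, ih2⟩ := ih
    rw [List.cons_append]
    by_cases h1 : a = cl
    · rw [uc_cons_cl h1, uc_cons_cl h1, uo_cons_cl hco h1, uo_cons_cl hco h1]
      constructor <;> omega
    · by_cases h2 : a = op
      · rw [uc_cons_op hco h2, uc_cons_op hco h2, uo_cons_op h2, uo_cons_op h2]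
        constructor <;> split_ifs <;> omega
      · rw [uc_cons_other h1 h2, uc_cons_other h1 h2,
          uo_cons_other h1 h2, uo_cons_other h1 h2]
        exact ⟨ih1, ih2⟩

theorem uc_append (cl op : ℕ) (hco : cl ≠ op) (L1 L2 : List (ℕ × β)) :
    uc cl op (L1 ++ L2) = uc cl op L1 + (uc cl op L2 - uo cl op L1) :=
  (uc_uo_append cl op hco L1 L2).1

theorem uo_append (cl op : ℕ) (hco : cl ≠ op) (L1 L2 : List (ℕ × β)) :
    uo cl op (L1 ++ L2) = uo cl op L2 + (uo cl op L1 - uc cl op L2) :=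
  (uc_uo_append cl op hco L1 L2).2

theorem uc_replicate_cl (cl op : ℕ) (hco : cl ≠ op) (k : ℕ) (x : β) :
    uc cl op (List.replicate k (cl, x)) = k ∧ uo cl op (List.replicate k (cl, x)) = 0 := by
  induction k with
  | zero => simp [uc_nil, uo_nil]
  | succ k ih =>
    rw [List.replicate_succ, uc_cons_cl rfl, uo_cons_cl hco rfl]
    omega

theorem uc_replicate_op (cl op : ℕ) (hco : cl ≠ op) (k : ℕ) (x : β) :
    uc cl op (List.replicate k (op, x)) = 0 ∧ uo cl op (List.replicate k (op, x)) = k := by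
  induction k with
  | zero => simp [uc_nil, uo_nil]
  | succ k ih =>
    rw [List.replicate_succ, uc_cons_op hco rfl, uo_cons_op rfl]
    constructor <;> [skip; split_ifs] <;> omega

theorem uc_uo_reverse (cl op : ℕ) (hco : cl ≠ op) (L : List (ℕ × β)) :
    uc op cl L.reverse = uo cl op L ∧ uo op cl L.reverse = uc cl op L := by
  induction L with
  | nil => simp [uc_nil, uo_nil]
  | cons x L ih =>
    obtain ⟨a, lbl⟩ := x
    obtain ⟨ih1, ih2⟩ := ih
    have h1 := uc_append op cl hco.symm L.reverse [(a, lbl)]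
    have h2 := uo_append op cl hco.symm L.reverse [(a, lbl)]
    rw [List.reverse_cons, h1, h2, ih1, ih2]
    by_cases ha : a = cl
    · rw [uc_cons_cl ha, uo_cons_cl hco ha]
      have e1 : uc op cl [(a, lbl)] = 0 := by
        rw [show [(a,lbl)] = (a,lbl) :: ([] : List (ℕ × β)) from rfl,
          uc_cons_op hco.symm ha, uc_nil]
      have e2 : uo op cl [(a, lbl)] = 1 := by
        rw [show [(a,lbl)] = (a,lbl) :: ([] : List (ℕ × β)) from rfl,
          uo_cons_op ha, uc_nil, uo_nil]
        simp
      rw [e1, e2]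
      constructor <;> omega
    · by_cases hb : a = op
      · rw [uc_cons_op hco hb, uo_cons_op hb]
        have e1 : uc op cl [(a, lbl)] = 1 := by
          rw [show [(a,lbl)] = (a,lbl) :: ([] : List (ℕ × β)) from rfl,
            uc_cons_cl hb, uc_nil]
        have e2 : uo op cl [(a, lbl)] = 0 := by
          rw [show [(a,lbl)] = (a,lbl) :: ([] : List (ℕ × β)) from rfl,
            uo_cons_cl hco.symm hb, uo_nil]
        rw [e1, e2]
        constructor <;> first | omega | (split_ifs <;> omega)
      · rw [uc_cons_other ha hb, uo_cons_other ha hb]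
        have e1 : uc op cl [(a, lbl)] = 0 := by
          rw [show [(a,lbl)] = (a,lbl) :: ([] : List (ℕ × β)) from rfl,
            uc_cons_other hb ha, uc_nil]
        have e2 : uo op cl [(a, lbl)] = 0 := by
          rw [show [(a,lbl)] = (a,lbl) :: ([] : List (ℕ × β)) from rfl,
            uo_cons_other hb ha, uo_nil]
        rw [e1, e2]
        constructor <;> omega

theorem lastUnmatched_eq_none_iff (cl op : ℕ) (hco : cl ≠ op) (L : List (ℕ × β)) (o : ℕ) :
    lastUnmatched cl op L o = none ↔ uc cl op L ≤ o := by
  induction L generalizing o with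
  | nil => simp [lastUnmatched, uc_nil]
  | cons x r ih =>
    obtain ⟨a, lbl⟩ := x
    by_cases h1 : a = cl
    · rw [uc_cons_cl h1]
      by_cases ho : o = 0
      · subst ho
        simp only [lastUnmatched, if_pos h1, if_pos rfl]
        constructor
        · intro h
          exfalso
          rcases hh : lastUnmatched cl op r 0 with _ | x <;> rw [hh] at h <;> simp at h
        · omega
      · simp only [lastUnmatched, if_pos h1, if_neg ho]
        rw [ih]
        omega
    · by_cases h2 : a = op
      · rw [uc_cons_op hco h2]
        simp only [lastUnmatched, if_neg h1, if_pos h2]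
        rw [ih]
        omega
      · rw [uc_cons_other h1 h2]
        simp only [lastUnmatched, if_neg h1, if_neg h2]
        exact ih o

theorem lastUnmatched_some (cl op : ℕ) (hco : cl ≠ op) (L : List (ℕ × β)) (o : ℕ) (lbl : β)
    (h : lastUnmatched cl op L o = some lbl) :
    ∃ L1 L2, L = L1 ++ (cl, lbl) :: L2 ∧ uo cl op L1 = 0 ∧ o ≤ uc cl op L1 ∧
      uc cl op L2 = 0 := by
  induction L generalizing o with
  | nil => simp [lastUnmatched] at h
  | cons x r ih =>
    obtain ⟨a, albl⟩ := x
    by_cases h1 : a = cl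
    · by_cases ho : o = 0
      · subst ho
        rw [lastUnmatched, if_pos h1, if_pos rfl] at h
        rcases hh : lastUnmatched cl op r 0 with _ | y <;> rw [hh] at h
        · simp only [Option.some.injEq] at h
          subst h
          refine ⟨[], r, by simp [h1], uo_nil cl op, le_refl _, ?_⟩
          have := (lastUnmatched_eq_none_iff cl op hco r 0).mp hh
          omega
        · simp only [Option.some.injEq] at h
          subst h
          obtain ⟨L1, L2, hL, hu, ho2, hc⟩ := ih 0 hh
          refine ⟨(a, albl) :: L1, L2, by simp [hL], ?_, ?_, hc⟩
          · rw [uo_cons_cl hco h1]; exact hu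
          · omega
      · rw [lastUnmatched, if_pos h1, if_neg ho] at h
        obtain ⟨L1, L2, hL, hu, ho2, hc⟩ := ih (o - 1) h
        refine ⟨(a, albl) :: L1, L2, by simp [hL], ?_, ?_, hc⟩
        · rw [uo_cons_cl hco h1]; exact hu
        · rw [uc_cons_cl h1]; omega
    · by_cases h2 : a = op
      · rw [lastUnmatched, if_neg h1, if_pos h2] at h
        obtain ⟨L1, L2, hL, hu, ho2, hc⟩ := ih (o + 1) h
        refine ⟨(a, albl) :: L1, L2, by simp [hL], ?_, ?_, hc⟩
        · rw [uo_cons_op h2]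
          have : ¬ uc cl op L1 = 0 := by omega
          rw [if_neg this]; exact hu
        · rw [uc_cons_op hco h2]; omega
      · rw [lastUnmatched, if_neg h1, if_neg h2] at h
        obtain ⟨L1, L2, hL, hu, ho2, hc⟩ := ih o h
        refine ⟨(a, albl) :: L1, L2, by simp [hL], ?_, ?_, hc⟩
        · rw [uo_cons_other h1 h2]; exact hu
        · rw [uc_cons_other h1 h2]; omega

theorem lastUnmatched_some' (cl op : ℕ) (hco : cl ≠ op) (L1 L2 : List (ℕ × β)) (o : ℕ) (lbl : β)
    (hu : uo cl op L1 = 0) (ho : o ≤ uc cl op L1) (hc : uc cl op L2 = 0) :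
    lastUnmatched cl op (L1 ++ (cl, lbl) :: L2) o = some lbl := by
  induction L1 generalizing o with
  | nil =>
    rw [uc_nil] at ho
    have ho0 : o = 0 := by omega
    subst ho0
    rw [List.nil_append, lastUnmatched, if_pos rfl, if_pos rfl]
    have : lastUnmatched cl op L2 0 = none :=
      (lastUnmatched_eq_none_iff cl op hco L2 0).mpr (by omega)
    rw [this]
  | cons x r ih =>
    obtain ⟨a, albl⟩ := x
    rw [List.cons_append]
    by_cases h1 : a = cl
    · rw [uo_cons_cl hco h1] at hu
      rw [uc_cons_cl h1] at ho
      by_cases ho0 : o = 0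
      · subst ho0
        rw [lastUnmatched, if_pos h1, if_pos rfl, ih 0 hu (by omega)]
      · rw [lastUnmatched, if_pos h1, if_neg ho0, ih (o - 1) hu (by omega)]
    · by_cases h2 : a = op
      · rw [uo_cons_op h2] at hu
        rw [uc_cons_op hco h2] at ho
        have hne : ¬ uc cl op r = 0 := by
          intro hz
          rw [if_pos hz] at hu
          omega
        rw [if_neg hne] at hu
        rw [lastUnmatched, if_neg h1, if_pos h2, ih (o + 1) hu (by omega)]
      · rw [uo_cons_other h1 h2] at hu
        rw [uc_cons_other h1 h2] at ho
        rw [lastUnmatched, if_neg h1, if_neg h2, ih o hu ho]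

theorem replicate_split {α : Type*} (k : ℕ) (e : α) (S a' Y : List α) (hS : e ∉ S)
    (h : List.replicate k e ++ S = a' ++ e :: Y) :
    ∃ j, j < k ∧ a' = List.replicate j e ∧ Y = List.replicate (k - 1 - j) e ++ S := by
  induction k generalizing a' with
  | zero =>
    exfalso
    rw [List.replicate_zero, List.nil_append] at h
    exact hS (h ▸ List.mem_append_right a' (List.mem_cons_self (a := e) (l := Y)))
  | succ k ih =>
    rw [List.replicate_succ, List.cons_append] at h
    cases a' with
    | nil =>
      refine ⟨0, by omega, rfl, ?_⟩
      simp only [List.nil_append] at h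
      have := List.tail_eq_of_cons_eq h
      simpa using this.symm
    | cons b a'' =>
      rw [List.cons_append] at h
      have hb : e = b := List.head_eq_of_cons_eq h
      have h' : List.replicate k e ++ S = a'' ++ e :: Y := List.tail_eq_of_cons_eq h
      obtain ⟨j, hj, ha, hy⟩ := ih a'' h'
      exact ⟨j + 1, by omega, by rw [ha, ← hb, List.replicate_succ], by
        rw [hy, show k + 1 - 1 - (j + 1) = k - 1 - j by omega]⟩

theorem run_split {α : Type*} [DecidableEq α] (Q S X Y : List α) (k : ℕ) (e : α)
    (hQ : e ∉ Q) (hS : e ∉ S)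
    (h : Q ++ List.replicate k e ++ S = X ++ e :: Y) :
    ∃ j, j < k ∧ X = Q ++ List.replicate j e ∧ Y = List.replicate (k - 1 - j) e ++ S := by
  rw [List.append_assoc] at h
  rcases (List.append_eq_append_iff).mp h with ⟨a', hQ', hrest⟩ | ⟨c', hX, hrest⟩
  · obtain ⟨j, hj, ha, hy⟩ := replicate_split k e S a' Y hS hrest
    exact ⟨j, hj, by rw [hQ', ha], hy⟩
  · cases c' with
    | nil =>
      simp only [List.nil_append] at hrest
      cases k with
      | zero =>
        exfalso
        rw [List.replicate_zero, List.nil_append] at hrest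
        exact hS (hrest ▸ List.mem_cons_self (a := e) (l := Y))
      | succ k =>
        rw [List.replicate_succ, List.cons_append] at hrest
        refine ⟨0, by omega, by simpa using hX.symm, ?_⟩
        have := List.tail_eq_of_cons_eq hrest
        simpa using this
    | cons b c'' =>
      exfalso
      have hb : b = e := (List.head_eq_of_cons_eq hrest).symm
      exact hQ (hX ▸ List.mem_append_right X (hb ▸ List.mem_cons_self (a := b) (l := c'')))

variable {m n : ℕ}

def colB (P : Matrix (Fin m) (Fin n) ℕ) (c' : Fin n) : List (ℕ × Fin n) :=
  (List.finRange m).flatMap fun t => List.replicate (P t c') (t.1 + 1, c')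

theorem rowWordLbl_eq (P : Matrix (Fin m) (Fin n) ℕ) :
    rowWordLbl P = (List.finRange n).flatMap (colB P) := rfl

theorem finRange_drop_cons (N k : ℕ) (h : k < N) :
    (List.finRange N).drop k = (⟨k, h⟩ : Fin N) :: (List.finRange N).drop (k + 1) := by
  rw [List.drop_eq_getElem_cons (by simpa using h)]
  congr 1
  simp [List.getElem_finRange, Fin.cast]

theorem snd_mem_colB {P : Matrix (Fin m) (Fin n) ℕ} {c' : Fin n} {x : ℕ × Fin n}
    (h : x ∈ colB P c') : x.2 = c' := by
  simp only [colB, List.mem_flatMap, List.mem_replicate] at h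
  obtain ⟨t, _, _, hx⟩ := h
  rw [hx]

theorem mem_rowWordLbl {M : Matrix (Fin m) (Fin n) ℕ} {v : ℕ} {c : Fin n}
    (h : (v, c) ∈ rowWordLbl M) : ∃ t : Fin m, t.1 + 1 = v ∧ M t c ≠ 0 := by
  simp only [rowWordLbl, List.mem_flatMap, List.mem_replicate] at h
  obtain ⟨c', _, t, _, hcount, heq⟩ := h
  have h1 : v = t.1 + 1 := congrArg Prod.fst heq
  have h2 : c = c' := congrArg Prod.snd heq
  exact ⟨t, h1.symm, by rw [h2]; exact hcount⟩

theorem struct (M : Matrix (Fin m) (Fin n) ℕ) (r : Fin m) (hr : r.1 + 1 < m) (c : Fin n) :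
    ∃ Q S : List (ℕ × Fin n),
      (r.1 + 1, c) ∉ Q ∧ (r.1 + 2, c) ∉ Q ∧ (r.1 + 1, c) ∉ S ∧ (r.1 + 2, c) ∉ S ∧
      ∀ N : Matrix (Fin m) (Fin n) ℕ,
        (∀ a b, (b ≠ c ∨ (a ≠ r ∧ a ≠ ⟨r.1 + 1, hr⟩)) → N a b = M a b) →
        rowWordLbl N = Q ++ (List.replicate (N r c) (r.1 + 1, c) ++
          (List.replicate (N ⟨r.1 + 1, hr⟩ c) (r.1 + 2, c) ++ S)) := by
  set r' : Fin m := ⟨r.1 + 1, hr⟩ with hr'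
  set lc := (List.finRange n).take c.1 with hlc
  set rc := (List.finRange n).drop (c.1 + 1) with hrc
  set lr := (List.finRange m).take r.1 with hlr
  set rr := (List.finRange m).drop (r.1 + 2) with hrr
  have hsplitn : List.finRange n = lc ++ c :: rc := by
    conv_lhs => rw [← List.take_append_drop c.1 (List.finRange n)]
    rw [finRange_drop_cons n c.1 c.isLt]
  have hsplitm : List.finRange m = lr ++ r :: r' :: rr := by
    conv_lhs => rw [← List.take_append_drop r.1 (List.finRange m)]
    rw [finRange_drop_cons m r.1 r.isLt, finRange_drop_cons m (r.1 + 1) hr]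
  have hnodn := List.nodup_finRange n
  rw [hsplitn] at hnodn
  have hcn : c ∉ lc ∧ c ∉ rc := by
    obtain ⟨-, h2, h3⟩ := List.nodup_append'.mp hnodn
    exact ⟨fun hmem => h3 hmem (List.mem_cons_self (a := c) (l := rc)), (List.nodup_cons.mp h2).1⟩
  have hnodm := List.nodup_finRange m
  rw [hsplitm] at hnodm
  have hrm : r ∉ lr ∧ r' ∉ lr ∧ r ∉ rr ∧ r' ∉ rr := by
    obtain ⟨-, h2, h3⟩ := List.nodup_append'.mp hnodm
    obtain ⟨h4, h5⟩ := List.nodup_cons.mp h2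
    obtain ⟨h6, -⟩ := List.nodup_cons.mp h5
    exact ⟨fun hmem => h3 hmem (List.mem_cons_self (a := r) (l := r' :: rr)),
      fun hmem => h3 hmem (List.mem_cons_of_mem r (List.mem_cons_self (a := r') (l := rr))),
      fun hmem => h4 (List.mem_cons_of_mem r' hmem), h6⟩
  refine ⟨lc.flatMap (colB M) ++ lr.flatMap (fun t => List.replicate (M t c) (t.1 + 1, c)),
    rr.flatMap (fun t => List.replicate (M t c) (t.1 + 1, c)) ++ rc.flatMap (colB M),
    ?_, ?_, ?_, ?_, ?_⟩
  case _ | _ =>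
    intro hmem
    rcases List.mem_append.mp hmem with hmem | hmem
    · obtain ⟨c', hc', hx⟩ := List.mem_flatMap.mp hmem
      have := snd_mem_colB hx
      simp only at this
      exact hcn.1 (this ▸ hc')
    · obtain ⟨t, ht, hx⟩ := List.mem_flatMap.mp hmem
      obtain ⟨-, hx⟩ := List.mem_replicate.mp hx
      have h1 := congrArg Prod.fst hx
      simp only at h1
      first
      | exact hrm.1 (show r ∈ lr from (by
          have : t = r := Fin.ext (by omega)
          exact this ▸ ht))
      | exact hrm.2.1 (show r' ∈ lr from (by
          have : t = r' := Fin.ext (by simp [hr']; omega)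
          exact this ▸ ht))
  case _ | _ =>
    intro hmem
    rcases List.mem_append.mp hmem with hmem | hmem
    · obtain ⟨t, ht, hx⟩ := List.mem_flatMap.mp hmem
      obtain ⟨-, hx⟩ := List.mem_replicate.mp hx
      have h1 := congrArg Prod.fst hx
      simp only at h1
      first
      | exact hrm.2.2.1 (show r ∈ rr from (by
          have : t = r := Fin.ext (by omega)
          exact this ▸ ht))
      | exact hrm.2.2.2 (show r' ∈ rr from (by
          have : t = r' := Fin.ext (by simp [hr']; omega)
          exact this ▸ ht))
    · obtain ⟨c', hc', hx⟩ := List.mem_flatMap.mp hmem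
      have := snd_mem_colB hx
      simp only at this
      exact hcn.2 (this ▸ hc')
  · intro N hN
    have hcol : ∀ c' : Fin n, c' ≠ c → colB N c' = colB M c' := by
      intro c' hc'
      exact List.flatMap_congr fun t _ => by rw [hN t c' (Or.inl hc')]
    have h2 : lc.flatMap (colB N) = lc.flatMap (colB M) :=
      List.flatMap_congr fun c' hc' => hcol c' (fun he => hcn.1 (he ▸ hc'))
    have h3 : rc.flatMap (colB N) = rc.flatMap (colB M) :=
      List.flatMap_congr fun c' hc' => hcol c' (fun he => hcn.2 (he ▸ hc'))
    have hlrN : lr.flatMap (fun t => List.replicate (N t c) (t.1 + 1, c)) =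
        lr.flatMap (fun t => List.replicate (M t c) (t.1 + 1, c)) :=
      List.flatMap_congr fun t ht => by
        rw [hN t c (Or.inr ⟨fun he => hrm.1 (he ▸ ht), fun he => hrm.2.1 (he ▸ ht)⟩)]
    have hrrN : rr.flatMap (fun t => List.replicate (N t c) (t.1 + 1, c)) =
        rr.flatMap (fun t => List.replicate (M t c) (t.1 + 1, c)) :=
      List.flatMap_congr fun t ht => by
        rw [hN t c (Or.inr ⟨fun he => hrm.2.2.1 (he ▸ ht), fun he => hrm.2.2.2 (he ▸ ht)⟩)]
    have hcolc : colB N c = lr.flatMap (fun t => List.replicate (M t c) (t.1 + 1, c)) ++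
        (List.replicate (N r c) (r.1 + 1, c) ++
          (List.replicate (N r' c) (r.1 + 2, c) ++
            rr.flatMap (fun t => List.replicate (M t c) (t.1 + 1, c)))) := by
      rw [colB, hsplitm, List.flatMap_append, List.flatMap_cons, List.flatMap_cons, hlrN, hrrN]
    rw [rowWordLbl_eq, hsplitn, List.flatMap_append, List.flatMap_cons, h2, h3, hcolc]
    simp only [List.append_assoc]

theorem frow_erow {i : ℕ} (him : i < m) {M M' : Matrix (Fin m) (Fin n) ℕ}
    (h : frow i M = some M') : erow i M' = some M := by
  rw [frow] at h
  obtain ⟨c, hc, hM'⟩ := Option.map_eq_some_iff.mp h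
  have hne : i ≠ i + 1 := by omega
  obtain ⟨L1, L2, hL, hu, -, hc2⟩ := lastUnmatched_some i (i + 1) hne _ 0 c hc
  have hmem : (i, c) ∈ rowWordLbl M := by
    rw [hL]; exact List.mem_append_right L1 List.mem_cons_self
  obtain ⟨t, ht, hMtc⟩ := mem_rowWordLbl hmem
  subst ht
  have hr : t.1 + 1 < m := him
  obtain ⟨Q, S, hQ1, hQ2, hS1, hS2, hword⟩ := struct M t hr c
  have hMM := hword M (fun a b _ => rfl)
  have hrep2 : ∀ (P : Matrix (Fin m) (Fin n) ℕ),
      List.replicate (P ⟨t.1 + 1, hr⟩ c) (t.1 + 2, c) =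
      List.replicate (P ⟨t.1 + 1, hr⟩ c) (t.1 + 1 + 1, c) := by
    intro P; rfl
  have hMM2 : Q ++ List.replicate (M t c) (t.1 + 1, c) ++
      (List.replicate (M ⟨t.1 + 1, hr⟩ c) (t.1 + 1 + 1, c) ++ S) =
      L1 ++ (t.1 + 1, c) :: L2 := by
    rw [List.append_assoc, ← hrep2 M, ← hMM, ← hL]
  have hnotin : (t.1 + 1, c) ∉ List.replicate (M ⟨t.1 + 1, hr⟩ c) (t.1 + 1 + 1, c) ++ S := by
    intro hx
    rcases List.mem_append.mp hx with hx | hx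
    · have := congrArg Prod.fst (List.eq_of_mem_replicate hx)
      simp only at this
      omega
    · exact hS1 hx
  obtain ⟨j, hj, hL1, hL2⟩ :=
    run_split Q _ L1 L2 (M t c) (t.1 + 1, c) hQ1 hnotin hMM2
  have hj' : M t c - 1 - j = 0 := by
    rw [hL2, uc_append (t.1 + 1) (t.1 + 1 + 1) hne] at hc2
    have h1 := uc_replicate_cl (t.1 + 1) (t.1 + 1 + 1) hne (M t c - 1 - j) c
    omega
  have hL2' : L2 = List.replicate (M ⟨t.1 + 1, hr⟩ c) (t.1 + 1 + 1, c) ++ S := by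
    rw [hL2, hj', List.replicate_zero, List.nil_append]
  have hL1' : L1 = Q ++ List.replicate (M t c - 1) (t.1 + 1, c) := by
    rw [hL1]; congr 2; omega
  have hM'word := hword M' (by
    intro a b hab
    rw [← hM']
    simp only [Matrix.of_apply]
    rcases hab with hb | ⟨ha1, ha2⟩
    · rw [if_neg (by tauto), if_neg (by tauto)]
    · have e1 : ¬ (a.1 + 1 = t.1 + 1 ∧ b = c) := by
        rintro ⟨h1, -⟩
        exact ha1 (Fin.ext (by omega))
      have e2 : ¬ (a.1 + 1 = t.1 + 1 + 1 ∧ b = c) := by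
        rintro ⟨h1, -⟩
        refine ha2 (Fin.ext ?_)
        simp only [Fin.val_mk]
        omega
      rw [if_neg e1, if_neg e2])
  have hM't : M' t c = M t c - 1 := by
    rw [← hM']; simp only [Matrix.of_apply]; rw [if_pos (by simp)]
  have hM't' : M' ⟨t.1 + 1, hr⟩ c = M ⟨t.1 + 1, hr⟩ c + 1 := by
    rw [← hM']
    simp only [Matrix.of_apply, Fin.val_mk]
    rw [if_neg (by rintro ⟨h1, -⟩; omega), if_pos (by simp)]
  have hM'decomp : rowWordLbl M' = L1 ++ (t.1 + 1 + 1, c) :: L2 := by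
    rw [hM'word, hrep2 M', hM't, hM't', hL1', hL2', List.replicate_succ, List.cons_append,
      List.append_assoc]
  rw [erow, hM'decomp]
  have hrev : (L1 ++ (t.1 + 1 + 1, c) :: L2).reverse =
      L2.reverse ++ (t.1 + 1 + 1, c) :: L1.reverse := by
    rw [List.reverse_append, List.reverse_cons, List.append_assoc, List.singleton_append]
  rw [hrev]
  have hcond1 : uo (t.1 + 1 + 1) (t.1 + 1) L2.reverse = 0 := by
    rw [(uc_uo_reverse (t.1 + 1) (t.1 + 1 + 1) hne L2).2, hc2]
  have hcond2 : uc (t.1 + 1 + 1) (t.1 + 1) L1.reverse = 0 := by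
    rw [(uc_uo_reverse (t.1 + 1) (t.1 + 1 + 1) hne L1).1, hu]
  rw [lastUnmatched_some' (t.1 + 1 + 1) (t.1 + 1) (by omega) L2.reverse L1.reverse 0 c hcond1
    (by omega) hcond2]
  rw [Option.map_some]
  congr 1
  rw [← hM']
  ext a b
  simp only [Matrix.of_apply]
  by_cases hb : b = c
  · subst hb
    simp only [eq_self_iff_true, and_true]
    by_cases hat : a = t
    · subst hat
      split_ifs <;> omega
    · have hf : a.1 + 1 ≠ t.1 + 1 := fun hx => hat (Fin.ext (by omega))
      split_ifs <;> omega
  · simp only [hb, and_false, if_false]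

theorem erow_frow {i : ℕ} (hi : 0 < i) (him : i < m) {M M' : Matrix (Fin m) (Fin n) ℕ}
    (h : erow i M = some M') : frow i M' = some M := by
  obtain ⟨k, rfl⟩ : ∃ k, i = k + 1 := ⟨i - 1, by omega⟩
  rw [erow] at h
  obtain ⟨c, hc, hM'⟩ := Option.map_eq_some_iff.mp h
  have hne : k + 1 + 1 ≠ k + 1 := by omega
  have hne' : k + 1 ≠ k + 1 + 1 := by omega
  obtain ⟨R1, R2, hL, hu, -, hc2⟩ :=
    lastUnmatched_some (k + 1 + 1) (k + 1) hne _ 0 c hc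
  have hword_eq : rowWordLbl M = R2.reverse ++ (k + 1 + 1, c) :: R1.reverse := by
    have h0 := congrArg List.reverse hL
    rw [List.reverse_reverse] at h0
    rw [h0, List.reverse_append, List.reverse_cons, List.append_assoc, List.singleton_append]
  have hmem : (k + 1 + 1, c) ∈ rowWordLbl M := by
    rw [hword_eq]; exact List.mem_append_right _ List.mem_cons_self
  obtain ⟨t2, ht2, hMt2c⟩ := mem_rowWordLbl hmem
  have hkm : k < m := by omega
  have hr : (⟨k, hkm⟩ : Fin m).1 + 1 < m := by simpa using him
  obtain ⟨Q, S, hQ1, hQ2, hS1, hS2, hword⟩ := struct M ⟨k, hkm⟩ hr c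
  simp only [Fin.val_mk] at hQ1 hQ2 hS1 hS2
  have ht2' : t2 = ⟨(⟨k, hkm⟩ : Fin m).1 + 1, hr⟩ := Fin.ext (by simp; omega)
  have hMM := hword M (fun a b _ => rfl)
  have hrep1 : ∀ (P : Matrix (Fin m) (Fin n) ℕ) (x : ℕ),
      List.replicate x ((⟨k, hkm⟩ : Fin m).1 + 1, c) = List.replicate x (k + 1, c) := by
    intro P x; rfl
  have hMM2 : (Q ++ List.replicate (M ⟨k, hkm⟩ c) (k + 1, c)) ++
      List.replicate (M t2 c) (k + 1 + 1, c) ++ S =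
      R2.reverse ++ (k + 1 + 1, c) :: R1.reverse := by
    simp only [List.append_assoc]
    rw [← hword_eq, hMM, ht2']
  have hQ'1 : (k + 1 + 1, c) ∉ Q ++ List.replicate (M ⟨k, hkm⟩ c) (k + 1, c) := by
    intro hx
    rcases List.mem_append.mp hx with hx | hx
    · exact hQ2 hx
    · have := congrArg Prod.fst (List.eq_of_mem_replicate hx)
      simp only at this
      omega
  obtain ⟨j, hj, hA, hB⟩ := run_split _ S R2.reverse R1.reverse (M t2 c)
    (k + 1 + 1, c) hQ'1 hS2 hMM2
  have huoA : uo (k + 1) (k + 1 + 1) R2.reverse = 0 :=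
    (uc_uo_reverse (k + 1 + 1) (k + 1) hne R2).2.trans hc2
  have hucB : uc (k + 1) (k + 1 + 1) R1.reverse = 0 :=
    (uc_uo_reverse (k + 1 + 1) (k + 1) hne R1).1.trans hu
  have hj0 : j = 0 := by
    rw [hA, uo_append (k + 1) (k + 1 + 1) hne'] at huoA
    have h1 := uc_replicate_op (k + 1) (k + 1 + 1) hne' j c
    omega
  have hA' : R2.reverse = Q ++ List.replicate (M ⟨k, hkm⟩ c) (k + 1, c) := by
    rw [hA, hj0, List.replicate_zero, List.append_nil]
  have hB' : R1.reverse = List.replicate (M t2 c - 1) (k + 1 + 1, c) ++ S := by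
    rw [hB, hj0, Nat.sub_zero]
  have hM'word := hword M' (by
    intro a b hab
    rw [← hM']
    simp only [Matrix.of_apply]
    rcases hab with hb | ⟨ha1, ha2⟩
    · rw [if_neg (by tauto), if_neg (by tauto)]
    · have e1 : ¬ (a.1 + 1 = k + 1 + 1 ∧ b = c) := by
        rintro ⟨h1, -⟩
        refine ha2 (Fin.ext ?_)
        simp only [Fin.val_mk]
        omega
      have e2 : ¬ (a.1 + 1 = k + 1 ∧ b = c) := by
        rintro ⟨h1, -⟩
        exact ha1 (Fin.ext (by simp; omega))
      rw [if_neg e1, if_neg e2])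
  have hM't : M' ⟨k, hkm⟩ c = M ⟨k, hkm⟩ c + 1 := by
    rw [← hM']
    simp only [Matrix.of_apply, Fin.val_mk]
    rw [if_neg (by rintro ⟨h1, -⟩; omega), if_pos (by simp)]
  have hM't2 : M' t2 c = M t2 c - 1 := by
    rw [← hM']
    simp only [Matrix.of_apply]
    rw [if_pos ⟨by omega, by trivial⟩]
  have hM'decomp : rowWordLbl M' = R2.reverse ++ (k + 1, c) :: R1.reverse := by
    rw [hM'word, ← ht2', hM't, hM't2, hA', hB', hrep1 M', List.replicate_succ',
      hrep1 M']
    rw [show (⟨k, hkm⟩ : Fin m).1 + 2 = k + 1 + 1 from rfl]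
    rw [List.append_assoc, List.append_assoc]
    rfl
  rw [frow, hM'decomp,
    lastUnmatched_some' (k + 1) (k + 1 + 1) hne' R2.reverse R1.reverse 0 c huoA
      (by omega) hucB, Option.map_some]
  congr 1
  rw [← hM']
  ext a b
  simp only [Matrix.of_apply]
  by_cases hb : b = c
  · subst hb
    simp only [eq_self_iff_true, and_true]
    by_cases hat : a = t2
    · subst hat
      split_ifs <;> omega
    · have hf : a.1 + 1 ≠ k + 1 + 1 := fun hx => hat (Fin.ext (by omega))
      split_ifs <;> omega
  · simp only [hb, and_false, if_false]

theorem fcol_ecol {j : ℕ} (hjn : j < n) {M M' : Matrix (Fin m) (Fin n) ℕ}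
    (h : fcol j M = some M') : ecol j M' = some M := by
  rw [fcol] at h
  obtain ⟨X, hX, hXt⟩ := Option.map_eq_some_iff.mp h
  have hX' : frow j M.transpose = some M'.transpose := by
    rw [hX, ← hXt, Matrix.transpose_transpose]
  have := frow_erow hjn hX'
  rw [ecol, this, Option.map_some, Matrix.transpose_transpose]

theorem ecol_fcol {j : ℕ} (hj : 0 < j) (hjn : j < n) {M M' : Matrix (Fin m) (Fin n) ℕ}
    (h : ecol j M = some M') : fcol j M' = some M := by
  rw [ecol] at h
  obtain ⟨X, hX, hXt⟩ := Option.map_eq_some_iff.mp h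
  have hX' : erow j M.transpose = some M'.transpose := by
    rw [hX, ← hXt, Matrix.transpose_transpose]
  have := erow_frow hj hjn hX'
  rw [fcol, this, Option.map_some, Matrix.transpose_transpose]

theorem exists_inverse {I J : Finset ℕ}
    {φ : Matrix (Fin m) (Fin n) ℕ → Option (Matrix (Fin m) (Fin n) ℕ)}
    (hadm : AdmissibleOp m n I J φ) :
    ∃ ψ, AdmissibleOp m n I J ψ ∧
      ∀ M M' : Matrix (Fin m) (Fin n) ℕ, φ M = some M' → ψ M' = some M := by
  rcases hadm with ⟨i, hi0, him, hiI, hf | he⟩ | ⟨j, hj0, hjn, hjJ, hf | he⟩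
  · exact ⟨erow i, Or.inl ⟨i, hi0, him, hiI, Or.inr rfl⟩,
      fun M M' h => frow_erow him (by rw [← hf]; exact h)⟩
  · exact ⟨frow i, Or.inl ⟨i, hi0, him, hiI, Or.inl rfl⟩,
      fun M M' h => erow_frow hi0 him (by rw [← he]; exact h)⟩
  · exact ⟨ecol j, Or.inr ⟨j, hj0, hjn, hjJ, Or.inr rfl⟩,
      fun M M' h => fcol_ecol hjn (by rw [← hf]; exact h)⟩
  · exact ⟨fcol j, Or.inr ⟨j, hj0, hjn, hjJ, Or.inl rfl⟩,
      fun M M' h => ecol_fcol hj0 hjn (by rw [← he]; exact h)⟩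

theorem matLT_mono (ord : TermOrder (Fin m × Fin n)) (Idl : Ideal (MvPolynomial (Fin m × Fin n) ℂ))
    {N M : Matrix (Fin m) (Fin n) ℕ} (hN : N ∈ matLT ord Idl)
    (hle : ∀ p q, N p q ≤ M p q) : M ∈ matLT ord Idl := by
  have hsum : expOf M = expOf (Matrix.of fun a b => M a b - N a b) + expOf N := by
    ext p
    simp only [expOf, Finsupp.coe_add, Pi.add_apply, Finsupp.equivFunOnFinite_symm_apply_apply,
      Matrix.of_apply]
    have := hle p.1 p.2
    omega
  have : (MvPolynomial.monomial (expOf M) (1 : ℂ)) =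
      (MvPolynomial.monomial (expOf (Matrix.of fun a b => M a b - N a b)) (1 : ℂ)) *
      (MvPolynomial.monomial (expOf N) (1 : ℂ)) := by
    rw [MvPolynomial.monomial_mul, one_mul, ← hsum]
  show MvPolynomial.monomial (expOf M) (1 : ℂ) ∈ initialIdeal ord Idl
  rw [this]
  exact Ideal.mul_mem_left _ _ hN

end GCS

open GCS in
/-- Theorem `firstmain`: given a test set for every admissible operator,
`I` is `(𝐈,𝐉,≺)`-bicrystalline iff `φ(N) ∈ Mat_≺ I ∪ {∅}` for every admissible `φ` and
every `N` in the corresponding test set. -/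
theorem bicrystalline_iff_testSet_condition
    (m n : ℕ) (I J : Finset ℕ) (hI : IsLeviDatum m I) (hJ : IsLeviDatum n J)
    (ord : TermOrder (Fin m × Fin n)) (Idl : Ideal (MvPolynomial (Fin m × Fin n) ℂ))
    (hstab : LeviStable I J Idl)
    (T : (Matrix (Fin m) (Fin n) ℕ → Option (Matrix (Fin m) (Fin n) ℕ)) →
      Set (Matrix (Fin m) (Fin n) ℕ))
    (hT : ∀ φ, AdmissibleOp m n I J φ → IsTestSet ord Idl φ (T φ)) :
    IsBicrystalline m n I J ord Idl ↔
      ∀ φ, AdmissibleOp m n I J φ → ∀ N ∈ T φ, ∀ N', φ N = some N' →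
        N' ∈ matLT ord Idl := by
  obtain - := hI
  obtain - := hJ
  constructor
  · intro hbic φ hadm N hNT N' hφ
    by_contra hnot
    obtain ⟨ψ, hψadm, hinv⟩ := exists_inverse hadm
    have h2 := hbic.2 ψ hψadm N' hnot N (hinv N N' hφ)
    exact h2 ((hT φ hadm).2.1 hNT)
  · intro hRHS
    refine ⟨hstab, ?_⟩
    intro φ hadm M hM N hφ
    intro hNin
    obtain ⟨ψ, hψadm, hinv⟩ := exists_inverse hadm
    apply hM
    -- show M ∈ matLT using ψ, test set for ψ, and hRHS
    obtain ⟨-, hTsub, hTtest⟩ := hT ψ hψadm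
    obtain ⟨P, hPT, hPle, a, b, hfa, hfb, hab⟩ := hTtest N hNin ⟨M, hinv M N hφ⟩
    have hb : b = M := by rw [hinv M N hφ] at hfb; exact (Option.some.injEq ..).mp hfb.symm
    subst hb
    exact matLT_mono ord Idl (hRHS ψ hψadm P hPT a hfa) fun p q => hab p q
end

section
/- Let J, K ⊆ ℂ[Mat_{m,n}] be ideals, ≺ a term order, φ an (𝐈,𝐉)-admissible bicrystal operator, and set I = J + K. Assume init_≺ I = init_≺ J + init_≺ K. If 𝓜_J is a test set for (J,≺,φ) and 𝓜_K is a test set for (K,≺,φ), then 𝓜_J ∪ 𝓜_K is a test set for (I,≺,φ). Consequently, if in addition J and K are (𝐈,𝐉,≺)-bicrystalline and I is L_𝐈×L_𝐉-stable, then I is (𝐈,𝐉,≺)-bicrystalline. -/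
namespace GCS

variable {m n : ℕ}

lemma initialIdeal_eq_span_image {σ : Type} (ord : TermOrder σ)
    (Idl : Ideal (MvPolynomial σ ℂ)) :
    initialIdeal ord Idl =
      Ideal.span ((fun u => MvPolynomial.monomial u (1 : ℂ)) ''
        {u | ∃ f ∈ Idl, IsInitExp ord f u}) := by
  unfold initialIdeal
  congr 1
  ext p
  constructor
  · rintro ⟨f, hf, u, hu, rfl⟩
    exact ⟨u, ⟨f, hf, hu⟩, rfl⟩
  · rintro ⟨u, ⟨f, hf, hu⟩, rfl⟩
    exact ⟨f, hf, u, hu, rfl⟩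

lemma mem_matLT_of_le {ord : TermOrder (Fin m × Fin n)}
    {Idl : Ideal (MvPolynomial (Fin m × Fin n) ℂ)}
    {u : (Fin m × Fin n) →₀ ℕ} {M : Matrix (Fin m) (Fin n) ℕ}
    (hu : MvPolynomial.monomial u (1 : ℂ) ∈ initialIdeal ord Idl)
    (hle : u ≤ expOf M) : M ∈ matLT ord Idl := by
  have : MvPolynomial.monomial (expOf M) (1 : ℂ)
      = MvPolynomial.monomial (expOf M - u) (1 : ℂ) * MvPolynomial.monomial u (1 : ℂ) := by
    rw [MvPolynomial.monomial_mul, one_mul, tsub_add_cancel_of_le hle]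
  show MvPolynomial.monomial (expOf M) (1 : ℂ) ∈ initialIdeal ord Idl
  rw [this]
  exact Ideal.mul_mem_left _ _ hu

lemma matLT_sum_eq (ord : TermOrder (Fin m × Fin n))
    (Jdl Kdl : Ideal (MvPolynomial (Fin m × Fin n) ℂ))
    (hinit : initialIdeal ord (Jdl + Kdl) = initialIdeal ord Jdl + initialIdeal ord Kdl) :
    matLT ord (Jdl + Kdl) = matLT ord Jdl ∪ matLT ord Kdl := by
  ext M
  constructor
  · intro hM
    have hM' : MvPolynomial.monomial (expOf M) (1 : ℂ) ∈
        Ideal.span ((fun u => MvPolynomial.monomial u (1 : ℂ)) ''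
          ({u | ∃ f ∈ Jdl, IsInitExp ord f u} ∪ {u | ∃ f ∈ Kdl, IsInitExp ord f u})) := by
      have := hM
      rw [matLT, Set.mem_setOf_eq, hinit, initialIdeal_eq_span_image ord Jdl,
        initialIdeal_eq_span_image ord Kdl] at this
      rwa [Set.image_union, Ideal.span_union, ← Submodule.add_eq_sup]
    rw [MvPolynomial.mem_ideal_span_monomial_image] at hM'
    have hsupp : expOf M ∈ (MvPolynomial.monomial (expOf M) (1 : ℂ)).support := by
      rw [MvPolynomial.support_monomial]
      simp
    obtain ⟨u, hu, hle⟩ := hM' _ hsupp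
    rcases hu with hu | hu
    · left
      refine mem_matLT_of_le ?_ hle
      rw [initialIdeal_eq_span_image ord Jdl]
      exact Ideal.subset_span ⟨u, hu, rfl⟩
    · right
      refine mem_matLT_of_le ?_ hle
      rw [initialIdeal_eq_span_image ord Kdl]
      exact Ideal.subset_span ⟨u, hu, rfl⟩
  · intro hM
    rcases hM with hM | hM
    · show MvPolynomial.monomial (expOf M) (1 : ℂ) ∈ initialIdeal ord (Jdl + Kdl)
      rw [hinit, Submodule.add_eq_sup]
      exact Submodule.mem_sup_left hM
    · show MvPolynomial.monomial (expOf M) (1 : ℂ) ∈ initialIdeal ord (Jdl + Kdl)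
      rw [hinit, Submodule.add_eq_sup]
      exact Submodule.mem_sup_right hM

end GCS

open GCS in
/-- Proposition `gbuniontestsets`: if `init_≺(J + K) = init_≺ J + init_≺ K`
then unions of test sets for `J` and `K` are test sets for `I = J + K`; consequently `I` is
`(𝐈,𝐉,≺)`-bicrystalline whenever `J` and `K` are and `I` is `L_𝐈 × L_𝐉`-stable. -/
theorem union_testSet_and_bicrystalline_sum
    (m n : ℕ) (I J : Finset ℕ) (hI : IsLeviDatum m I) (hJ : IsLeviDatum n J)
    (ord : TermOrder (Fin m × Fin n))
    (Jdl Kdl : Ideal (MvPolynomial (Fin m × Fin n) ℂ))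
    (hinit : initialIdeal ord (Jdl + Kdl) = initialIdeal ord Jdl + initialIdeal ord Kdl)
    (TJ TK : (Matrix (Fin m) (Fin n) ℕ → Option (Matrix (Fin m) (Fin n) ℕ)) →
      Set (Matrix (Fin m) (Fin n) ℕ))
    (hTJ : ∀ φ, AdmissibleOp m n I J φ → IsTestSet ord Jdl φ (TJ φ))
    (hTK : ∀ φ, AdmissibleOp m n I J φ → IsTestSet ord Kdl φ (TK φ)) :
    (∀ φ, AdmissibleOp m n I J φ → IsTestSet ord (Jdl + Kdl) φ (TJ φ ∪ TK φ)) ∧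
    (IsBicrystalline m n I J ord Jdl → IsBicrystalline m n I J ord Kdl →
      LeviStable I J (Jdl + Kdl) → IsBicrystalline m n I J ord (Jdl + Kdl)) := by
  have hmat := matLT_sum_eq ord Jdl Kdl hinit
  constructor
  · intro φ hφ
    obtain ⟨hJfin, hJsub, hJtest⟩ := hTJ φ hφ
    obtain ⟨hKfin, hKsub, hKtest⟩ := hTK φ hφ
    refine ⟨hJfin.union hKfin, ?_, ?_⟩
    · rw [hmat]
      exact Set.union_subset_union hJsub hKsub
    · intro M hM hM'
      rw [hmat] at hM
      rcases hM with hM | hM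
      · obtain ⟨N, hN, h1, h2⟩ := hJtest M hM hM'
        exact ⟨N, Or.inl hN, h1, h2⟩
      · obtain ⟨N, hN, h1, h2⟩ := hKtest M hM hM'
        exact ⟨N, Or.inr hN, h1, h2⟩
  · intro hbJ hbK hstab
    refine ⟨hstab, ?_⟩
    intro φ hφ M hM N hN
    simp only [Set.mem_setOf_eq, hmat, Set.mem_union, not_or] at hM
    have h1 := hbJ.2 φ hφ M hM.1 N hN
    have h2 := hbK.2 φ hφ M hM.2 N hN
    rw [Set.mem_setOf_eq, hmat]
    rw [Set.mem_setOf_eq] at h1 h2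
    exact fun h => h.elim h1 h2
end

section
/- Let (𝐈,𝐉) be a Levi datum for (m,n), let M ∈ Mat_{m,n}(ℤ≥0), and write RSK(M) = (P,Q). Then M is (𝐈,𝐉)-highest weight (i.e., φ(M) = ∅ for every admissible raising operator φ ∈ {e_i^row : i ∉ 𝐈} ∪ {e_j^col : j ∉ 𝐉}) if and only if P is an 𝐈-LR tableau and Q is a 𝐉-LR tableau. -/
namespace GCS

variable {m n : ℕ}

/-! ### Auxiliary lemmas -/

theorem ke_refl (l : List ℕ) : KnuthEquiv l l := Relation.EqvGen.refl l
theorem ke_symm {l l'} (h : KnuthEquiv l l') : KnuthEquiv l' l := Relation.EqvGen.symm _ _ h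
theorem ke_trans {a b c} (h1 : KnuthEquiv a b) (h2 : KnuthEquiv b c) : KnuthEquiv a c :=
  Relation.EqvGen.trans _ _ _ h1 h2
theorem ke_of_step {a b} (h : KnuthStep a b) : KnuthEquiv a b := Relation.EqvGen.rel _ _ h

theorem step_append {a b} (u v : List ℕ) (h : KnuthStep a b) :
    KnuthStep (u ++ a ++ v) (u ++ b ++ v) := by
  cases h with
  | swap1 u' v' p q r h1 h2 =>
      have e1 : u ++ (u' ++ p :: r :: q :: v') ++ v
          = (u ++ u') ++ p :: r :: q :: (v' ++ v) := by simp
      have e2 : u ++ (u' ++ r :: p :: q :: v') ++ v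
          = (u ++ u') ++ r :: p :: q :: (v' ++ v) := by simp
      rw [e1, e2]; exact KnuthStep.swap1 _ _ p q r h1 h2
  | swap2 u' v' p q r h1 h2 =>
      have e1 : u ++ (u' ++ q :: p :: r :: v') ++ v
          = (u ++ u') ++ q :: p :: r :: (v' ++ v) := by simp
      have e2 : u ++ (u' ++ q :: r :: p :: v') ++ v
          = (u ++ u') ++ q :: r :: p :: (v' ++ v) := by simp
      rw [e1, e2]; exact KnuthStep.swap2 _ _ p q r h1 h2

theorem ke_append {a b} (u v : List ℕ) (h : KnuthEquiv a b) :
    KnuthEquiv (u ++ a ++ v) (u ++ b ++ v) := by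
  induction h with
  | rel x y hxy => exact ke_of_step (step_append u v hxy)
  | refl x => exact ke_refl _
  | symm x y _ ih => exact ke_symm ih
  | trans x y z _ _ ih1 ih2 => exact ke_trans ih1 ih2

theorem ke_append_left {a b} (u : List ℕ) (h : KnuthEquiv a b) :
    KnuthEquiv (u ++ a) (u ++ b) := by
  simpa using ke_append u [] h

theorem ke_append_right {a b} (v : List ℕ) (h : KnuthEquiv a b) :
    KnuthEquiv (a ++ v) (b ++ v) := by
  simpa using ke_append [] v h

/-- Move a small letter `x` leftwards past an increasing block `L` anchored at `a`. -/
theorem moveLeft : ∀ (L : List ℕ) (a x : ℕ), List.Pairwise (· ≤ ·) (a :: L) → x < a →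
    KnuthEquiv ((a :: L) ++ [x]) (a :: x :: L) := by
  intro L
  induction L using List.reverseRecOn with
  | nil => intro a x _ _; exact ke_refl _
  | append_singleton L' z ih =>
      intro a x hp hx
      obtain ⟨u, w, hu⟩ : ∃ u w, a :: L' = u ++ [w] := by
        refine ⟨(a :: L').dropLast, (a :: L').getLast (by simp), ?_⟩
        exact (List.dropLast_append_getLast (by simp)).symm
      have hwL : w ∈ a :: L' := by rw [hu]; simp
      have hxw : x < w := by
        rcases List.mem_cons.1 hwL with h | h
        · omega
        · have := (List.pairwise_cons.1 hp).1 w (by simp [h])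
          omega
      have hwz : w ≤ z := by
        have hp' := hp
        rw [show a :: (L' ++ [z]) = (a :: L') ++ [z] by simp, hu] at hp'
        have := List.pairwise_append.1 hp'
        exact this.2.2 w (by simp) z (by simp)
      have step : KnuthStep (u ++ w :: x :: z :: []) (u ++ w :: z :: x :: []) :=
        KnuthStep.swap2 u [] x w z hxw hwz
      have hp2 : List.Pairwise (· ≤ ·) (a :: L') := by
        refine hp.sublist ?_
        rw [show a :: (L' ++ [z]) = (a :: L') ++ [z] by simp]
        exact List.sublist_append_left (a :: L') [z]
      have e1 : (a :: (L' ++ [z])) ++ [x] = u ++ w :: z :: x :: [] := by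
        rw [show a :: (L' ++ [z]) = (a :: L') ++ [z] by simp, hu]; simp
      have k1 : KnuthEquiv ((a :: (L' ++ [z])) ++ [x]) (u ++ w :: x :: z :: []) := by
        rw [e1]; exact ke_symm (ke_of_step step)
      have e2 : u ++ w :: x :: z :: [] = ((a :: L') ++ [x]) ++ [z] := by
        rw [hu]; simp
      have k2 : KnuthEquiv (u ++ w :: x :: z :: []) (a :: x :: (L' ++ [z])) := by
        rw [e2]
        have := ke_append_right [z] (ih a x hp2 hx)
        simpa using this
      exact ke_trans k1 k2
/-- Move a big letter `y` leftwards over small letters. -/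
theorem moveYleft : ∀ (R1 : List ℕ) (x y : ℕ) (V : List ℕ),
    List.Pairwise (· ≤ ·) (R1 ++ [x]) → x < y →
    KnuthEquiv (R1 ++ y :: x :: V) (y :: R1 ++ x :: V) := by
  intro R1
  induction R1 using List.reverseRecOn with
  | nil => intro x y V _ _; exact ke_refl _
  | append_singleton R1' c ih =>
      intro x y V hp hx
      have hcx : c ≤ x := by
        have h := List.pairwise_append.1 hp
        exact h.2.2 c (by simp) x (by simp)
      have step : KnuthStep (R1' ++ c :: y :: x :: V) (R1' ++ y :: c :: x :: V) :=
        KnuthStep.swap1 R1' V c x y hcx hx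
      have hp2 : List.Pairwise (· ≤ ·) (R1' ++ [c]) := by
        refine hp.sublist ?_
        rw [show (R1' ++ [c]) ++ [x] = R1' ++ ([c] ++ [x]) by simp]
        exact (List.sublist_append_left (R1' ++ [c]) [x]).trans (by simp)
      have k2 : KnuthEquiv (R1' ++ y :: c :: x :: V) (y :: (R1' ++ [c]) ++ x :: V) := by
        have := ih c y (x :: V) hp2 (lt_of_le_of_lt hcx hx)
        simpa using this
      have k1 : KnuthEquiv ((R1' ++ [c]) ++ y :: x :: V) (R1' ++ y :: c :: x :: V) := by
        have := ke_of_step step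
        simpa using this
      exact ke_trans k1 k2

/-- Schensted bumping is a Knuth move: `R ++ [x] ≡ y :: (R with y replaced by x)`. -/
theorem fulton (R1 R2 : List ℕ) (x y : ℕ)
    (hp : List.Pairwise (· ≤ ·) (R1 ++ y :: R2))
    (hR1 : ∀ e ∈ R1, e ≤ x) (hxy : x < y) :
    KnuthEquiv ((R1 ++ y :: R2) ++ [x]) (y :: R1 ++ x :: R2) := by
  have hyR2 : List.Pairwise (· ≤ ·) (y :: R2) := by
    refine hp.sublist ?_
    exact List.sublist_append_right R1 (y :: R2)
  have k1 : KnuthEquiv ((R1 ++ y :: R2) ++ [x]) (R1 ++ y :: x :: R2) := by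
    have := ke_append_left R1 (moveLeft R2 y x hyR2 hxy)
    simpa using this
  have hp1 : List.Pairwise (· ≤ ·) (R1 ++ [x]) := by
    rw [List.pairwise_append]
    refine ⟨hp.sublist (List.sublist_append_left R1 _), by simp, ?_⟩
    intro a ha b hb
    simp at hb; subst hb; exact hR1 a ha
  exact ke_trans k1 (moveYleft R1 x y R2 hp1 hxy)

/-- Move a strictly decreasing block `ds` of small letters left past an increasing block. -/
theorem blockMove : ∀ (ds : List ℕ) (a : ℕ) (L : List ℕ),
    List.Pairwise (· ≤ ·) (a :: L) → List.Pairwise (· > ·) (a :: ds) →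
    (∀ d ∈ ds, ∀ e ∈ L, d < e) →
    KnuthEquiv ((a :: L) ++ ds) ((a :: ds) ++ L) := by
  intro ds
  induction ds with
  | nil => intro a L _ _ _; simpa using ke_refl (a :: L)
  | cons d ds' ih =>
      intro a L hL hds hdl
      have hda : d < a := (List.pairwise_cons.1 hds).1 d (by simp)
      have k1 : KnuthEquiv ((a :: L) ++ d :: ds') ((a :: d :: L) ++ ds') := by
        have := ke_append_right ds' (moveLeft L a d hL hda)
        simpa using this
      have hdL : List.Pairwise (· ≤ ·) (d :: L) := by
        rw [List.pairwise_cons]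
        exact ⟨fun e he => le_of_lt (hdl d (by simp) e he), (List.pairwise_cons.1 hL).2⟩
      have hdds : List.Pairwise (· > ·) (d :: ds') := by
        exact (List.pairwise_cons.1 hds).2
      have k2 : KnuthEquiv ((d :: L) ++ ds') ((d :: ds') ++ L) := by
        refine ih d L hdL hdds ?_
        intro d' hd' e he; exact hdl d' (by simp [hd']) e he
      have k3 : KnuthEquiv ((a :: d :: L) ++ ds') (a :: (d :: ds') ++ L) := by
        have := ke_append_left [a] k2
        simpa using this
      have := ke_trans k1 k3
      simpa using this
/-! ### Tableau invariants and row insertion -/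

/-- `S` fits below `R` in a semistandard tableau. -/
def Below1 (R S : List ℕ) : Prop :=
  S.length ≤ R.length ∧ ∀ j < S.length, R.getD j 0 < S.getD j 0

/-- Semistandardness invariant (rows top-to-bottom, possibly empty). -/
def Inv2 (T : List (List ℕ)) : Prop :=
  (∀ r ∈ T, List.Pairwise (· ≤ ·) r) ∧ List.Chain' Below1 T

/-- The row reading word (rows bottom to top). -/
def rword (T : List (List ℕ)) : List ℕ := T.reverse.flatten

theorem getD_set_eq (l : List ℕ) (k x j : ℕ) (hj : j < l.length) :
    (l.set k x).getD j 0 = if k = j then x else l.getD j 0 := by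
  rw [List.getD_eq_getElem _ _ (by simpa using hj), List.getElem_set]
  split
  · rfl
  · rw [List.getD_eq_getElem _ _ hj]

theorem pairwise_le_set {l : List ℕ} {k x : ℕ} (hp : List.Pairwise (· ≤ ·) l)
    (hk : k < l.length) (hle : ∀ j < k, l.getD j 0 ≤ x) (hx : x ≤ l.getD k 0) :
    List.Pairwise (· ≤ ·) (l.set k x) := by
  rw [List.pairwise_iff_getElem] at hp ⊢
  intro i j hi hj hij
  simp only [List.length_set] at hi hj
  rw [List.getElem_set, List.getElem_set]
  rw [List.getD_eq_getElem _ _ hk] at hx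
  split
  · rename_i hki
    subst hki
    split
    · omega
    · exact le_trans hx (hp k j hk hj hij)
  · split
    · rename_i h1 h2
      subst h2
      have := hle i (by omega)
      rwa [List.getD_eq_getElem _ _ hi] at this
    · exact hp i j hi hj hij

/-- What `rowInsert` does to the first row. -/
def FrHead (T : List (List ℕ)) (x : ℕ) (T' : List (List ℕ)) : Prop :=
  T' ≠ [] ∧
  ((T'.headD [] = T.headD [] ++ [x] ∧ ∀ e ∈ T.headD [], e ≤ x) ∨
   (∃ k, k < (T.headD []).length ∧ T'.headD [] = (T.headD []).set k x ∧
     x < (T.headD []).getD k 0 ∧ ∀ j < k, (T.headD []).getD j 0 ≤ x))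

theorem rowInsert_nil (x : ℕ) : rowInsert [] x = [[x]] := rfl

theorem insert_inv : ∀ (T : List (List ℕ)) (x : ℕ), Inv2 T →
    Inv2 (rowInsert T x) ∧ FrHead T x (rowInsert T x) := by
  intro T
  induction T with
  | nil =>
      intro x _
      rw [rowInsert_nil]
      refine ⟨⟨?_, by simp [List.Chain']⟩, by simp, Or.inl (by simp)⟩
      intro r hr; simp at hr; simp [hr]
  | cons row rest ih =>
      intro x hInv
      obtain ⟨hrows, hchain⟩ := hInv
      have hrow : List.Pairwise (· ≤ ·) row := hrows row (by simp)
      have hInvRest : Inv2 rest :=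
        ⟨fun r hr => hrows r (by simp [hr]), hchain.tail⟩
      cases hfind : row.findIdx? (fun y => decide (x < y)) with
      | none =>
          have hres : rowInsert (row :: rest) x = (row ++ [x]) :: rest := by
            rw [rowInsert, hfind]
          rw [hres]
          have hall : ∀ e ∈ row, e ≤ x := by
            intro e he
            have := List.findIdx?_eq_none_iff.1 hfind e he
            simp at this; omega
          have hpw : List.Pairwise (· ≤ ·) (row ++ [x]) := by
            rw [List.pairwise_append]
            exact ⟨hrow, by simp, fun a ha b hb => by simp at hb; subst hb; exact hall a ha⟩
          constructor
          · constructor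
            · intro r hr
              rcases List.mem_cons.1 hr with h | h
              · subst h; exact hpw
              · exact hrows r (by simp [h])
            · cases rest with
              | nil => simp [List.Chain']
              | cons S t =>
                  simp only [List.Chain', List.isChain_cons_cons] at hchain ⊢
                  refine ⟨⟨by have := hchain.1.1; simp; omega, ?_⟩, hchain.2⟩
                  intro j hj
                  rw [List.getD_append _ _ _ _ (by have := hchain.1.1; omega)]
                  exact hchain.1.2 j hj
          · exact ⟨by simp, Or.inl ⟨rfl, hall⟩⟩
      | some k =>
          have hres : rowInsert (row :: rest) x
              = row.set k x :: rowInsert rest (row.getD k 0) := by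
            rw [rowInsert, hfind]
          rw [hres]
          obtain ⟨hk, hpk, hjlt⟩ := List.findIdx?_eq_some_iff_getElem.1 hfind
          have hgetk : row.getD k 0 = row[k] := List.getD_eq_getElem _ _ hk
          simp only [decide_eq_true_eq] at hpk
          have hxy : x < row.getD k 0 := by omega
          have hjle : ∀ j < k, row.getD j 0 ≤ x := by
            intro j hj
            have h1 := hjlt j hj
            simp only [decide_eq_true_eq] at h1
            rw [List.getD_eq_getElem _ _ (by omega)]
            omega
          obtain ⟨ihInv, ihFr⟩ := ih (row.getD k 0) hInvRest
          have hr0 : Below1 row (rest.headD []) := by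
            cases rest with
            | nil => exact ⟨by simp, by simp⟩
            | cons S t => exact (List.isChain_cons_cons.1 hchain).1
          have hBelowNew : Below1 (row.set k x)
              ((rowInsert rest (row.getD k 0)).headD []) := by
            rcases ihFr.2 with ⟨happ, hler0⟩ | ⟨k', hk', hset, hyk', hjk'⟩
            · -- appended at the end of the head row of `rest`
              have hlenr0 : (rest.headD []).length ≤ k := by
                by_contra hcon
                push_neg at hcon
                have h1 := hr0.2 k hcon
                have h2 : (rest.headD []).getD k 0 ∈ rest.headD [] := by
                  rw [List.getD_eq_getElem _ _ hcon]
                  exact List.getElem_mem _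
                have := hler0 _ h2
                omega
              rw [happ]
              have hlen : (rest.headD []).length ≤ row.length := hr0.1
              refine ⟨by simp only [List.length_append, List.length_set,
                List.length_cons, List.length_nil]; omega, ?_⟩
              intro j hj
              simp only [List.length_append, List.length_cons, List.length_nil] at hj
              rw [getD_set_eq row k x j (by omega)]
              rcases Nat.lt_or_ge j (rest.headD []).length with h | h
              · rw [List.getD_append _ _ _ _ h]
                have := hr0.2 j h
                split <;> omega
              · have hj' : j = (rest.headD []).length := by omega
                have : ((rest.headD []) ++ [row.getD k 0]).getD j 0 = row.getD k 0 := by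
                  rw [List.getD_append_right _ _ _ _ h, hj']
                  simp
                rw [this]
                rcases Nat.lt_or_ge j k with h2 | h2
                · have := hjle j h2
                  split <;> omega
                · have : j = k := by omega
                  split <;> omega
            · -- bumped at position `k'` of the head row of `rest`
              have hk'k : k' ≤ k := by
                by_contra hcon
                push_neg at hcon
                have h1 := hr0.2 k (by omega)
                have h2 := hjk' k hcon
                omega
              rw [hset]
              have hlen : (rest.headD []).length ≤ row.length := hr0.1
              refine ⟨by simp only [List.length_set]; omega, ?_⟩
              intro j hj
              simp only [List.length_set] at hj
              rw [getD_set_eq row k x j (by omega),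
                  getD_set_eq (rest.headD []) k' (row.getD k 0) j hj]
              have hb := hr0.2 j hj
              by_cases h1 : k' = j <;> by_cases h2 : k = j
              · simp only [if_pos h1, if_pos h2]; omega
              · simp only [if_pos h1, if_neg h2]
                have := hjle j (by omega)
                omega
              · simp only [if_neg h1, if_pos h2]; subst h2; omega
              · simp only [if_neg h1, if_neg h2]; omega
          have hT''ne : rowInsert rest (row.getD k 0) ≠ [] := ihFr.1
          constructor
          · constructor
            · intro r hr
              rcases List.mem_cons.1 hr with h | h
              · subst h
                exact pairwise_le_set hrow hk hjle (le_of_lt hxy)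
              · exact ihInv.1 r h
            · cases hT''e : rowInsert rest (row.getD k 0) with
              | nil => exact absurd hT''e hT''ne
              | cons h' t' =>
                  simp only [List.Chain', List.isChain_cons_cons]
                  constructor
                  · rw [hT''e] at hBelowNew
                    exact hBelowNew
                  · have h2 := ihInv.2
                    rw [hT''e] at h2
                    exact h2
          · refine ⟨by simp, Or.inr ⟨k, hk, rfl, hxy, hjle⟩⟩
/-! ### Row insertion is a Knuth move -/

theorem set_eq_take_cons_drop : ∀ (l : List ℕ) (k : ℕ), k < l.length → ∀ x,
    l.set k x = l.take k ++ x :: l.drop (k + 1) := by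
  intro l
  induction l with
  | nil => intro k hk; simp at hk
  | cons a t ih =>
      intro k hk x
      cases k with
      | zero => simp
      | succ k' =>
          simp only [List.set_cons_succ, List.take_succ_cons, List.drop_succ_cons,
            List.cons_append, List.cons.injEq, true_and]
          exact ih k' (by simpa using hk) x

theorem rword_cons (R : List ℕ) (rest : List (List ℕ)) :
    rword (R :: rest) = rword rest ++ R := by
  simp [rword]

theorem rword_insert : ∀ (T : List (List ℕ)) (x : ℕ), Inv2 T →
    KnuthEquiv (rword (rowInsert T x)) (rword T ++ [x]) := by
  intro T
  induction T with
  | nil => intro x _; rw [rowInsert_nil]; exact ke_refl _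
  | cons row rest ih =>
      intro x hInv
      obtain ⟨hrows, hchain⟩ := hInv
      have hrow : List.Pairwise (· ≤ ·) row := hrows row (by simp)
      have hInvRest : Inv2 rest :=
        ⟨fun r hr => hrows r (by simp [hr]), hchain.tail⟩
      cases hfind : row.findIdx? (fun y => decide (x < y)) with
      | none =>
          have hres : rowInsert (row :: rest) x = (row ++ [x]) :: rest := by
            rw [rowInsert, hfind]
          rw [hres, rword_cons, rword_cons]
          rw [show rword rest ++ (row ++ [x]) = (rword rest ++ row) ++ [x] by simp]
          exact ke_refl _
      | some k =>
          have hres : rowInsert (row :: rest) x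
              = row.set k x :: rowInsert rest (row.getD k 0) := by
            rw [rowInsert, hfind]
          rw [hres, rword_cons, rword_cons]
          obtain ⟨hk, hpk, hjlt⟩ := List.findIdx?_eq_some_iff_getElem.1 hfind
          have hgetk : row.getD k 0 = row[k] := List.getD_eq_getElem _ _ hk
          simp only [decide_eq_true_eq] at hpk
          have hxy : x < row.getD k 0 := by omega
          have hdecomp : row = row.take k ++ row.getD k 0 :: row.drop (k + 1) := by
            rw [hgetk]
            conv_lhs => rw [← List.take_append_drop k row]
            rw [List.drop_eq_getElem_cons hk]
          have hsetd : row.set k x = row.take k ++ x :: row.drop (k + 1) :=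
            set_eq_take_cons_drop row k hk x
          have hR1 : ∀ e ∈ row.take k, e ≤ x := by
            intro e he
            obtain ⟨j, hj⟩ := List.mem_iff_getElem?.1 he
            have hjlen : j < (row.take k).length := (List.getElem?_eq_some_iff.1 hj).1
            have hjk : j < k := by simp at hjlen; omega
            rw [List.getElem?_take_of_lt hjk] at hj
            have hje : row[j]'(by simp at hjlen; omega) = e := by
              have := List.getElem?_eq_some_iff.1 hj
              exact this.2
            have := hjlt j hjk
            simp only [decide_eq_true_eq] at this
            omega
          have hful : KnuthEquiv (row ++ [x]) (row.getD k 0 :: row.take k ++ x :: row.drop (k + 1)) := by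
            conv_lhs => rw [hdecomp]
            exact fulton (row.take k) (row.drop (k + 1)) x (row.getD k 0)
              (by rw [← hdecomp]; exact hrow) hR1 hxy
          have k1 : KnuthEquiv (rword (rowInsert rest (row.getD k 0)) ++ row.set k x)
              ((rword rest ++ [row.getD k 0]) ++ row.set k x) :=
            ke_append_right _ (ih (row.getD k 0) hInvRest)
          have k2 : KnuthEquiv ((rword rest ++ [row.getD k 0]) ++ row.set k x)
              (rword rest ++ (row ++ [x])) := by
            have e1 : (rword rest ++ [row.getD k 0]) ++ row.set k x
                = rword rest ++ (row.getD k 0 :: row.take k ++ x :: row.drop (k + 1)) := by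
              rw [hsetd]; simp
            rw [e1]
            exact ke_append_left _ (ke_symm hful)
          have := ke_trans k1 k2
          exact ke_trans this (by rw [show rword rest ++ (row ++ [x]) = (rword rest ++ row) ++ [x] by simp]; exact ke_refl _)

theorem tab_append_singleton (w : List ℕ) (x : ℕ) :
    tab (w ++ [x]) = rowInsert (tab w) x := by
  simp [tab]

theorem tab_inv : ∀ w : List ℕ, Inv2 (tab w) := by
  intro w
  induction w using List.reverseRecOn with
  | nil => exact ⟨by simp [tab], by simp [tab, List.Chain']⟩
  | append_singleton w' x ih =>
      rw [tab_append_singleton]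
      exact (insert_inv (tab w') x ih).1

theorem ke_tab_rword : ∀ w : List ℕ, KnuthEquiv w (rword (tab w)) := by
  intro w
  induction w using List.reverseRecOn with
  | nil => exact ke_refl _
  | append_singleton w' x ih =>
      rw [tab_append_singleton]
      refine ke_trans ?_ (ke_symm (rword_insert (tab w') x (tab_inv w')))
      exact ke_append_right [x] ih
/-! ### The column reading word -/

/-- Column `j` of `T`, read bottom to top. -/
def colRead (T : List (List ℕ)) (j : ℕ) : List ℕ :=
  (List.range T.length).reverse.filterMap fun r => (T.getD r [])[j]?

theorem tabWord_eq_flatMap (T : List (List ℕ)) :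
    tabWord T = (List.range (T.getD 0 []).length).flatMap (colRead T) := by
  unfold tabWord tabWordLbl colRead
  rw [List.map_flatMap]
  congr 1
  funext j
  rw [List.map_filterMap]
  congr 1
  funext r
  cases h : (T.getD r [])[j]? <;> simp [h]

theorem getD_tail (l : List ℕ) (j : ℕ) : l.tail.getD j 0 = l.getD (j + 1) 0 := by
  cases l <;> simp [List.getD]

theorem getD_map_tail (T : List (List ℕ)) (r : ℕ) :
    (T.map List.tail).getD r [] = (T.getD r []).tail := by
  rcases Nat.lt_or_ge r T.length with h | h
  · rw [List.getD_eq_getElem _ _ (by simpa using h), List.getD_eq_getElem _ _ h,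
      List.getElem_map]
  · rw [List.getD_eq_default _ _ (by simpa using h), List.getD_eq_default _ _ h]
    rfl

theorem colRead_shift (T : List (List ℕ)) (j : ℕ) :
    colRead T (j + 1) = colRead (T.map List.tail) j := by
  unfold colRead
  rw [List.length_map]
  apply List.filterMap_congr
  intro r _
  rw [getD_map_tail, List.getElem?_tail]

theorem claimA (T : List (List ℕ)) (hne : (T.getD 0 []).length ≠ 0) :
    tabWord T = colRead T 0 ++ tabWord (T.map List.tail) := by
  obtain ⟨c, hc⟩ : ∃ c, (T.getD 0 []).length = c + 1 :=
    ⟨(T.getD 0 []).length - 1, by omega⟩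
  rw [tabWord_eq_flatMap, tabWord_eq_flatMap, hc, List.range_succ_eq_map,
    List.flatMap_cons, List.flatMap_map]
  congr 1
  have hlen : ((T.map List.tail).getD 0 []).length = c := by
    rw [getD_map_tail, List.length_tail, hc]
    omega

  rw [hlen]
  apply List.flatMap_congr ?_
  intro j _
  exact colRead_shift T j

instance below1_trans : IsTrans (List ℕ) Below1 := by
  constructor
  intro a b c hab hbc
  obtain ⟨h1, h2⟩ := hab
  obtain ⟨h3, h4⟩ := hbc
  refine ⟨le_trans h3 h1, ?_⟩
  intro j hj
  exact lt_trans (h2 j (by omega)) (h4 j hj)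

theorem inv2_pairwise {T : List (List ℕ)} (h : Inv2 T) : List.Pairwise Below1 T :=
  List.isChain_iff_pairwise.1 h.2

theorem inv2_of_pairwise {T : List (List ℕ)}
    (h1 : ∀ r ∈ T, List.Pairwise (· ≤ ·) r) (h2 : List.Pairwise Below1 T) : Inv2 T :=
  ⟨h1, List.isChain_iff_pairwise.2 h2⟩

theorem below1_tail {R S : List ℕ} (h : Below1 R S) : Below1 R.tail S.tail := by
  obtain ⟨h1, h2⟩ := h
  refine ⟨by simp only [List.length_tail]; omega, ?_⟩
  intro j hj
  simp only [List.length_tail] at hj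
  rw [getD_tail, getD_tail]
  exact h2 (j + 1) (by omega)

theorem inv2_map_tail {T : List (List ℕ)} (h : Inv2 T) : Inv2 (T.map List.tail) := by
  refine inv2_of_pairwise ?_ ?_
  · intro r hr
    obtain ⟨s, hs, rfl⟩ := List.mem_map.1 hr
    exact (h.1 s hs).sublist (List.tail_sublist s)
  · rw [List.pairwise_map]
    exact (inv2_pairwise h).imp below1_tail

theorem inv2_prefix {rest : List (List ℕ)} {R : List ℕ} (h : Inv2 (rest ++ [R])) :
    Inv2 rest := by
  refine inv2_of_pairwise (fun r hr => h.1 r (by simp [hr])) ?_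
  exact (inv2_pairwise h).sublist (List.sublist_append_left _ _)

theorem pairwise_filterMap' {α β : Type} {R : α → α → Prop} {S : β → β → Prop}
    (f : α → Option β) {l : List α}
    (hf : ∀ a b, R a b → ∀ x, f a = some x → ∀ y, f b = some y → S x y)
    (hp : List.Pairwise R l) : List.Pairwise S (l.filterMap f) := by
  induction l with
  | nil => simp
  | cons a l ih =>
      rw [List.pairwise_cons] at hp
      cases hfa : f a with
      | none => rw [List.filterMap_cons_none hfa]; exact ih hp.2
      | some x =>
          rw [List.filterMap_cons_some hfa]
          rw [List.pairwise_cons]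
          refine ⟨?_, ih hp.2⟩
          intro y hy
          obtain ⟨b, hb, hfb⟩ := List.mem_filterMap.1 hy
          exact hf a b (hp.1 b hb) x hfa y hfb
theorem colRead_append_zero (rest : List (List ℕ)) (R : List ℕ) :
    colRead (rest ++ [R]) 0 = R[0]?.toList ++ colRead rest 0 := by
  unfold colRead
  have hcongr : ((List.range rest.length).reverse.filterMap
        fun r => ((rest ++ [R]).getD r [])[0]?)
      = (List.range rest.length).reverse.filterMap fun r => (rest.getD r [])[0]? := by
    apply List.filterMap_congr
    intro r hr
    rw [List.mem_reverse, List.mem_range] at hr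
    rw [List.getD_append _ _ _ _ hr]
  have hgetn : (rest ++ [R]).getD rest.length [] = R := by
    rw [List.getD_append_right _ _ _ _ (le_refl _)]
    simp
  rw [List.length_append, List.length_cons, List.length_nil, List.range_succ,
    List.reverse_append]
  simp only [List.reverse_cons, List.reverse_nil, List.nil_append, List.singleton_append]
  rw [List.filterMap_cons, hgetn, hcongr]
  cases h0 : R[0]? <;> simp

theorem rword_append_singleton (rest : List (List ℕ)) (R : List ℕ) :
    rword (rest ++ [R]) = R ++ rword rest := by
  simp [rword]

theorem claimB : ∀ (T : List (List ℕ)), Inv2 T →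
    KnuthEquiv (rword T) (colRead T 0 ++ rword (T.map List.tail)) := by
  intro T
  induction T using List.reverseRecOn with
  | nil =>
      intro _
      simp only [colRead, List.length_nil, List.range_zero, List.reverse_nil,
        List.filterMap_nil, List.map_nil, List.nil_append]
      exact ke_refl _
  | append_singleton rest R ih =>
      intro hInv
      have hrest : Inv2 rest := inv2_prefix hInv
      have hpwB : List.Pairwise Below1 (rest ++ [R]) := inv2_pairwise hInv
      have hBel : ∀ r, r < rest.length → Below1 (rest.getD r []) R := by
        intro r hrn
        have h := (List.pairwise_append.1 hpwB).2.2
        refine h (rest.getD r []) ?_ R (by simp)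
        rw [List.getD_eq_getElem _ _ hrn]
        exact List.getElem_mem _
      have hpwRest : List.Pairwise Below1 rest := (inv2_pairwise hrest)
      rw [colRead_append_zero, rword_append_singleton,
        show (rest ++ [R]).map List.tail = rest.map List.tail ++ [R.tail] by simp,
        rword_append_singleton]
      cases R with
      | nil =>
          simpa using ih hrest
      | cons h Rt =>
          simp only [List.getElem?_cons_zero, Option.toList_some, List.tail_cons]
          -- membership description of elements of colRead rest 0
          have hmem : ∀ d ∈ colRead rest 0, ∃ r, r < rest.length ∧
              0 < (rest.getD r []).length ∧ (rest.getD r []).getD 0 0 = d := by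
            intro d hd
            obtain ⟨r, hr, hfr⟩ := List.mem_filterMap.1 hd
            rw [List.mem_reverse, List.mem_range] at hr
            obtain ⟨hlen, hval⟩ := List.getElem?_eq_some_iff.1 hfr
            exact ⟨r, hr, hlen, by rw [List.getD_eq_getElem _ _ hlen]; exact hval⟩
          have h1 : List.Pairwise (· ≤ ·) (h :: Rt) := hInv.1 (h :: Rt) (by simp)
          have h2 : List.Pairwise (· > ·) (h :: colRead rest 0) := by
            rw [List.pairwise_cons]
            constructor
            · intro d hd
              obtain ⟨r, hrn, hlen, hval⟩ := hmem d hd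
              have hb := (hBel r hrn).2 0 (by simp)
              simp only [List.getD_cons_zero] at hb
              omega
            · refine pairwise_filterMap' (R := fun a b => a > b) _ ?_ ?_
              · intro a b hab x hx y hy
                have ha : a < rest.length := by
                  by_contra hcon
                  rw [List.getD_eq_default _ _ (by omega)] at hx
                  simp at hx
                have hb : b < rest.length := by
                  by_contra hcon
                  rw [List.getD_eq_default _ _ (by omega)] at hy
                  simp at hy
                obtain ⟨hxl, hxv⟩ := List.getElem?_eq_some_iff.1 hx
                obtain ⟨hyl, hyv⟩ := List.getElem?_eq_some_iff.1 hy
                have hxd : (rest.getD a []).getD 0 0 = x := by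
                  rw [List.getD_eq_getElem _ _ hxl]; exact hxv
                have hyd : (rest.getD b []).getD 0 0 = y := by
                  rw [List.getD_eq_getElem _ _ hyl]; exact hyv
                have hpa := List.pairwise_iff_getElem.1 hpwRest b a hb ha hab
                have hlt := hpa.2 0 (by rw [← List.getD_eq_getElem _ _ ha]; exact hxl)
                rw [← List.getD_eq_getElem rest [] ha, ← List.getD_eq_getElem rest [] hb] at hlt
                omega
              · rw [List.pairwise_reverse]
                exact List.pairwise_lt_range (n := rest.length)
          have h3 : ∀ d ∈ colRead rest 0, ∀ e ∈ Rt, d < e := by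
            intro d hd e he
            obtain ⟨r, hrn, hlen, hval⟩ := hmem d hd
            obtain ⟨j, hj, hje⟩ := List.mem_iff_getElem.1 he
            have hblw := hBel r hrn
            have hlen2 : j + 1 < (rest.getD r []).length := by
              have := hblw.1
              simp only [List.length_cons] at this
              omega
            have hrowpw := List.pairwise_iff_getElem.1 (hrest.1 (rest.getD r [])
              (by rw [List.getD_eq_getElem _ _ hrn]; exact List.getElem_mem _))
            have hmono := hrowpw 0 (j + 1) (by omega) hlen2 (by omega)
            have hcol := hblw.2 (j + 1) (by simpa using by omega)
            rw [List.getD_eq_getElem _ _ hlen2] at hcol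
            have hhead : (h :: Rt).getD (j + 1) 0 = e := by
              rw [List.getD_cons_succ, List.getD_eq_getElem _ _ hj, hje]
            rw [hhead] at hcol
            rw [List.getD_eq_getElem _ _ hlen] at hval
            omega
          have kB := blockMove (colRead rest 0) h Rt h1 h2 h3
          have k1 : KnuthEquiv ((h :: Rt) ++ rword rest)
              ((h :: Rt) ++ (colRead rest 0 ++ rword (rest.map List.tail))) :=
            ke_append_left _ (ih hrest)
          have k2 : KnuthEquiv (((h :: Rt) ++ colRead rest 0) ++ rword (rest.map List.tail))
              (((h :: colRead rest 0) ++ Rt) ++ rword (rest.map List.tail)) :=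
            ke_append_right _ kB
          have k3 : KnuthEquiv ((h :: Rt) ++ (colRead rest 0 ++ rword (rest.map List.tail)))
              ((h :: colRead rest 0) ++ (Rt ++ rword (rest.map List.tail))) := by
            have e1 : (h :: Rt) ++ (colRead rest 0 ++ rword (rest.map List.tail))
                = ((h :: Rt) ++ colRead rest 0) ++ rword (rest.map List.tail) := by simp
            have e2 : (h :: colRead rest 0) ++ (Rt ++ rword (rest.map List.tail))
                = ((h :: colRead rest 0) ++ Rt) ++ rword (rest.map List.tail) := by simp
            rw [e1, e2]; exact k2
          exact ke_trans k1 k3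

theorem rword_ke_tabWord : ∀ (c : ℕ) (T : List (List ℕ)), Inv2 T →
    (T.getD 0 []).length = c → KnuthEquiv (rword T) (tabWord T) := by
  intro c
  induction c with
  | zero =>
      intro T hInv h0
      have hrows : ∀ r ∈ T, r = [] := by
        intro r hr
        cases T with
        | nil => simp at hr
        | cons R0 rest =>
            have hR0 : R0 = [] := by
              have : ((R0 :: rest).getD 0 []).length = 0 := h0
              simpa using this
            rcases List.mem_cons.1 hr with h | h
            · rw [h, hR0]
            · have hpw := inv2_pairwise hInv
              rw [List.pairwise_cons] at hpw
              have := (hpw.1 r h).1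
              rw [hR0] at this
              simp at this
              exact this
      have h1 : rword T = [] := by
        rw [rword, List.flatten_eq_nil_iff]
        intro l hl
        exact hrows l (List.mem_reverse.1 hl)
      have h2 : tabWord T = [] := by
        rw [tabWord_eq_flatMap, h0]
        simp
      rw [h1, h2]
      exact ke_refl _
  | succ c ihc =>
      intro T hInv h0
      rw [claimA T (by omega)]
      refine ke_trans (claimB T hInv) ?_
      refine ke_append_left _ (ihc (T.map List.tail) (inv2_map_tail hInv) ?_)
      rw [getD_map_tail, List.length_tail, h0]
      omega

theorem ke_tabWord (w : List ℕ) : KnuthEquiv w (tabWord (tab w)) :=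
  ke_trans (ke_tab_rword w) (rword_ke_tabWord _ (tab w) (tab_inv w) rfl)
/-! ### Highest-weight words -/

/-- Suffix count condition for the raising operator `e_i`. -/
def okc (i : ℕ) (w : List ℕ) : Prop := w.count (i + 1) ≤ w.count i

/-- `w` is `i`-highest weight: every suffix has at least as many `i`s as `i+1`s. -/
def HW (i : ℕ) (w : List ℕ) : Prop := ∀ k, okc i (w.drop k)

theorem hw_zero {i : ℕ} {v : List ℕ} (h : HW i v) : okc i v := by
  have := h 0; simpa using this

theorem hw_cons {i a : ℕ} {w : List ℕ} : HW i (a :: w) ↔ okc i (a :: w) ∧ HW i w := by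
  constructor
  · intro h
    exact ⟨hw_zero h, fun k => by have := h (k + 1); simpa using this⟩
  · rintro ⟨h0, h⟩ k
    cases k with
    | zero => simpa using h0
    | succ k => simpa using h k

theorem forall_drop_cons {P : List ℕ → Prop} {a : ℕ} {u : List ℕ} :
    (∀ k, P ((a :: u).drop k)) ↔ P (a :: u) ∧ ∀ k, P (u.drop k) := by
  constructor
  · intro h
    exact ⟨by simpa using h 0, fun k => by have := h (k + 1); simpa using this⟩
  · rintro ⟨h0, h⟩ k
    cases k with
    | zero => simpa using h0
    | succ k => simpa using h k

theorem hw_append {i : ℕ} {u v : List ℕ} :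
    HW i (u ++ v) ↔ (∀ k, okc i (u.drop k ++ v)) ∧ HW i v := by
  induction u with
  | nil =>
      simp only [List.nil_append, List.drop_nil]
      exact ⟨fun h => ⟨fun _ => hw_zero h, h⟩, fun h => h.2⟩
  | cons a u ih =>
      rw [List.cons_append, hw_cons, ih]
      rw [show (∀ k, okc i ((a :: u).drop k ++ v)) ↔
        (okc i ((a :: u) ++ v) ∧ ∀ k, okc i (u.drop k ++ v)) from
        forall_drop_cons (P := fun s => okc i (s ++ v))]
      tauto

theorem perm_okc {i : ℕ} {l l' : List ℕ} (hp : l.Perm l') : okc i l ↔ okc i l' := by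
  unfold okc; rw [hp.count_eq, hp.count_eq]

theorem hw_step {w w' : List ℕ} (h : KnuthStep w w') (i : ℕ) : HW i w ↔ HW i w' := by
  cases h with
  | swap1 u v p q r h1 h2 =>
      have hperm : (p :: r :: q :: v).Perm (r :: p :: q :: v) := List.Perm.swap r p (q :: v)
      rw [hw_append, hw_append]
      apply and_congr
      · apply forall_congr'
        intro k
        exact perm_okc (List.Perm.append_left _ hperm)
      · rw [hw_cons, hw_cons, hw_cons, hw_cons, hw_cons, hw_cons]
        constructor
        · rintro ⟨o1, o2, o3, hv⟩
          have hv0 := hw_zero hv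
          refine ⟨(perm_okc hperm).1 o1, ?_, o3, hv⟩
          simp only [okc, List.count_cons, beq_iff_eq] at o1 o2 o3 hv0 ⊢
          split_ifs at o1 o2 o3 hv0 ⊢ <;> omega
        · rintro ⟨o1, o2, o3, hv⟩
          have hv0 := hw_zero hv
          refine ⟨(perm_okc hperm).2 o1, ?_, o3, hv⟩
          simp only [okc, List.count_cons, beq_iff_eq] at o1 o2 o3 hv0 ⊢
          split_ifs at o1 o2 o3 hv0 ⊢ <;> omega
  | swap2 u v p q r h1 h2 =>
      have hperm0 : (p :: r :: v).Perm (r :: p :: v) := List.Perm.swap r p v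
      have hperm : (q :: p :: r :: v).Perm (q :: r :: p :: v) := List.Perm.cons q hperm0
      rw [hw_append, hw_append]
      apply and_congr
      · apply forall_congr'
        intro k
        exact perm_okc (List.Perm.append_left _ hperm)
      · rw [hw_cons, hw_cons, hw_cons, hw_cons, hw_cons, hw_cons]
        constructor
        · rintro ⟨o1, o2, o3, hv⟩
          have hv0 := hw_zero hv
          refine ⟨(perm_okc hperm).1 o1, (perm_okc hperm0).1 o2, ?_, hv⟩
          simp only [okc, List.count_cons, beq_iff_eq] at o1 o2 o3 hv0 ⊢
          split_ifs at o1 o2 o3 hv0 ⊢ <;> omega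
        · rintro ⟨o1, o2, o3, hv⟩
          have hv0 := hw_zero hv
          refine ⟨(perm_okc hperm).2 o1, (perm_okc hperm0).2 o2, ?_, hv⟩
          simp only [okc, List.count_cons, beq_iff_eq] at o1 o2 o3 hv0 ⊢
          split_ifs at o1 o2 o3 hv0 ⊢ <;> omega

theorem hw_ke {w w' : List ℕ} (h : KnuthEquiv w w') (i : ℕ) : HW i w ↔ HW i w' := by
  induction h with
  | rel x y hxy => exact hw_step hxy i
  | refl x => rfl
  | symm x y _ ih => exact ih.symm
  | trans x y z _ _ ih1 ih2 => exact ih1.trans ih2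
/-! ### Characterization of when a raising operator vanishes -/

set_option linter.unnecessarySeqFocus false in
theorem lastUnmatched_eq_none_iff_s8 {β : Type} (cl op : ℕ) (hne : cl ≠ op) :
    ∀ (l : List (ℕ × β)) (o : ℕ),
    lastUnmatched cl op l o = none ↔
      ∀ k, ((l.take k).map Prod.fst).count cl ≤ o + ((l.take k).map Prod.fst).count op := by
  intro l
  induction l with
  | nil => intro o; simp [lastUnmatched]
  | cons a rest ih =>
      intro o
      obtain ⟨av, albl⟩ := a
      have hstep : (∀ k, ((((av, albl) :: rest).take k).map Prod.fst).count cl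
            ≤ o + ((((av, albl) :: rest).take k).map Prod.fst).count op)
          ↔ ∀ k, ((av :: (rest.take k).map Prod.fst)).count cl
            ≤ o + ((av :: (rest.take k).map Prod.fst)).count op := by
        constructor
        · intro h k
          have := h (k + 1)
          simpa using this
        · intro h k
          cases k with
          | zero => simp
          | succ k => simpa using h k
      rw [hstep]
      rw [lastUnmatched]
      by_cases hac : av = cl
      · rw [if_pos hac]
        by_cases ho : o = 0
        · subst ho
          rw [if_pos rfl]
          constructor
          · intro h
            exfalso
            cases e : lastUnmatched cl op rest 0 <;> simp [e] at h
          · intro h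
            exfalso
            have h0 := h 0
            rw [hac] at h0
            simp only [List.take_zero, List.map_nil, List.count_cons, List.count_nil,
              beq_iff_eq, if_true] at h0
            rw [if_neg hne] at h0
            omega
        · rw [if_neg ho, ih (o - 1)]
          apply forall_congr'
          intro k
          simp only [List.count_cons, beq_iff_eq, hac]
          split_ifs <;> omega
      · rw [if_neg hac]
        by_cases hao : av = op
        · rw [if_pos hao, ih (o + 1)]
          apply forall_congr'
          intro k
          simp only [List.count_cons, beq_iff_eq, hao]
          split_ifs <;> omega
        · rw [if_neg hao, ih o]
          apply forall_congr'
          intro k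
          simp only [List.count_cons, beq_iff_eq]
          split_ifs <;> omega

theorem hw_iff_rev_take {i : ℕ} {w : List ℕ} :
    (∀ k, (w.reverse.take k).count (i + 1) ≤ (w.reverse.take k).count i) ↔ HW i w := by
  constructor
  · intro h k
    have hk := h (w.length - k)
    rw [List.take_reverse] at hk
    unfold okc
    rcases le_or_gt k w.length with hle | hlt
    · rw [show w.length - (w.length - k) = k by omega] at hk
      simpa using hk
    · rw [List.drop_eq_nil_of_le (by omega)]
      simp
  · intro h k
    rw [List.take_reverse]
    have := h (w.length - k)
    unfold okc at this
    simpa using this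

theorem erow_eq_none_iff {m n : ℕ} (i : ℕ) (M : Matrix (Fin m) (Fin n) ℕ) :
    erow i M = none ↔ HW i (rowWord M) := by
  unfold erow
  rw [Option.map_eq_none_iff]
  rw [lastUnmatched_eq_none_iff_s8 (i + 1) i (by omega) _ 0]
  rw [← hw_iff_rev_take (i := i) (w := rowWord M)]
  apply forall_congr'
  intro k
  have hmap : (((rowWordLbl M).reverse.take k).map Prod.fst)
      = (rowWord M).reverse.take k := by
    rw [List.map_take, List.map_reverse]
    rfl
  rw [hmap]
  omega

theorem ecol_eq_none_iff {m n : ℕ} (j : ℕ) (M : Matrix (Fin m) (Fin n) ℕ) :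
    ecol j M = none ↔ HW j (colWord M) := by
  unfold ecol
  rw [Option.map_eq_none_iff]
  exact erow_eq_none_iff j M.transpose
/-! ### Ballot words, intervals and Levi data -/

theorem hw_filter {i : ℕ} {p : ℕ → Bool} (hpi : p i = true) (hpi1 : p (i + 1) = true) :
    ∀ {w : List ℕ}, HW i (w.filter p) ↔ HW i w := by
  intro w
  induction w with
  | nil => simp
  | cons a w ih =>
      by_cases hpa : p a
      · rw [List.filter_cons_of_pos hpa, hw_cons, hw_cons, ih]
        apply and_congr _ Iff.rfl
        simp only [okc, List.count_cons, List.count_filter hpi, List.count_filter hpi1]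
      · rw [List.filter_cons_of_neg (by simpa using hpa), ih, hw_cons]
        have hai : a ≠ i := fun h => by rw [h, hpi] at hpa; exact hpa rfl
        have hai1 : a ≠ i + 1 := fun h => by rw [h, hpi1] at hpa; exact hpa rfl
        constructor
        · intro h
          refine ⟨?_, h⟩
          have h0 := hw_zero h
          simp only [okc, List.count_cons, beq_iff_eq] at h0 ⊢
          split_ifs <;> omega
        · exact fun h => h.2

theorem isLRInterval_iff_hw (A B : ℕ) (T : List (List ℕ)) :
    IsLRInterval A B T ↔ ∀ i, A ≤ i → i + 1 ≤ B → HW i (tabWord T) := by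
  unfold IsLRInterval IsBallot
  simp only [List.filter_reverse]
  constructor
  · intro h i hA hB
    have hq : ∀ k, ((((tabWord T).filter fun x => decide (A ≤ x ∧ x ≤ B)).reverse).take k).count (i + 1)
        ≤ ((((tabWord T).filter fun x => decide (A ≤ x ∧ x ≤ B)).reverse).take k).count i :=
      fun k => h k i hA hB
    have h1 := hw_iff_rev_take.1 hq
    exact (hw_filter (by simp; omega) (by simp; omega)).1 h1
  · intro h k i hA hB
    have h1 : HW i ((tabWord T).filter fun x => decide (A ≤ x ∧ x ≤ B)) :=
      (hw_filter (by simp; omega) (by simp; omega)).2 (h i hA hB)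
    exact hw_iff_rev_take.2 h1 k

theorem levi_iff {N : ℕ} {K : Finset ℕ} (hK : IsLeviDatum N K) (X : ℕ → Prop) :
    (∀ a b, a ∈ K → b ∈ K → a < b → (∀ x ∈ K, ¬(a < x ∧ x < b)) →
      ∀ i, a + 1 ≤ i → i + 1 ≤ b → X i) ↔
    (∀ i, 0 < i → i < N → i ∉ K → X i) := by
  obtain ⟨h0, hN, hle⟩ := hK
  constructor
  · intro h i hi0 hiN hiK
    have hAne : (K.filter (fun y => y < i)).Nonempty :=
      ⟨0, Finset.mem_filter.2 ⟨h0, hi0⟩⟩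
    have hBne : (K.filter (fun y => i < y)).Nonempty :=
      ⟨N, Finset.mem_filter.2 ⟨hN, hiN⟩⟩
    set a := (K.filter (fun y => y < i)).max' hAne with ha
    set b := (K.filter (fun y => i < y)).min' hBne with hb
    have haK := Finset.mem_filter.1 (Finset.max'_mem _ hAne)
    have hbK := Finset.mem_filter.1 (Finset.min'_mem _ hBne)
    have hmax : ∀ x ∈ K, x < i → x ≤ a := by
      intro x hx hxi
      exact Finset.le_max' (K.filter (fun y => y < i)) x (Finset.mem_filter.2 ⟨hx, hxi⟩)
    have hmin : ∀ x ∈ K, i < x → b ≤ x := by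
      intro x hx hxi
      exact Finset.min'_le (K.filter (fun y => i < y)) x (Finset.mem_filter.2 ⟨hx, hxi⟩)
    refine h a b haK.1 hbK.1 (lt_trans haK.2 hbK.2) ?_ i (by omega) (by omega)
    rintro x hx ⟨hax, hxb⟩
    rcases lt_trichotomy x i with hxi | hxi | hxi
    · have := hmax x hx hxi; omega
    · subst hxi; exact hiK hx
    · have := hmin x hx hxi; omega
  · intro h a b haK hbK hab hgap i h1 h2
    refine h i (by omega) (by have := hle b hbK; omega) ?_
    intro hiK
    exact hgap i hiK ⟨by omega, by omega⟩

theorem isKLR_iff_hw {N : ℕ} {K : Finset ℕ} (hK : IsLeviDatum N K) (w : List ℕ) :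
    IsKLR K (tab w) ↔ ∀ i, 0 < i → i < N → i ∉ K → HW i w := by
  have hmain : IsKLR K (tab w) ↔
      ∀ i, 0 < i → i < N → i ∉ K → HW i (tabWord (tab w)) := by
    rw [← levi_iff hK (fun i => HW i (tabWord (tab w)))]
    unfold IsKLR
    constructor
    · intro h a b ha hb hab hgap
      exact (isLRInterval_iff_hw _ _ _).1 (h a b ha hb hab hgap)
    · intro h a b ha hb hab hgap
      exact (isLRInterval_iff_hw _ _ _).2 (h a b ha hb hab hgap)
  rw [hmain]
  apply forall_congr'
  intro i
  rw [show (HW i (tabWord (tab w))) ↔ HW i w from (hw_ke (ke_tabWord w) i).symm]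

end GCS

open GCS in
/-- Proposition `LRtab`: with `RSK(M) = (P, Q)`, the matrix `M` is
`(𝐈,𝐉)`-highest weight (every admissible raising operator kills it) iff `P` is an
`𝐈`-LR tableau and `Q` is a `𝐉`-LR tableau. -/
theorem highestWeight_iff_LR
    (m n : ℕ) (I J : Finset ℕ) (hI : IsLeviDatum m I) (hJ : IsLeviDatum n J)
    (M : Matrix (Fin m) (Fin n) ℕ) (P Q : List (List ℕ))
    (hP : P = tab (rowWord M)) (hQ : Q = tab (colWord M)) :
    ((∀ i, 0 < i → i < m → i ∉ I → erow i M = none) ∧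
     (∀ j, 0 < j → j < n → j ∉ J → ecol j M = none)) ↔
    (IsKLR I P ∧ IsKLR J Q) := by
  subst hP hQ
  have hrow : (∀ i, 0 < i → i < m → i ∉ I → erow i M = none)
      ↔ ∀ i, 0 < i → i < m → i ∉ I → HW i (rowWord M) := by
    apply forall_congr'
    intro i
    exact imp_congr Iff.rfl (imp_congr Iff.rfl (imp_congr Iff.rfl (erow_eq_none_iff i M)))
  have hcol : (∀ j, 0 < j → j < n → j ∉ J → ecol j M = none)
      ↔ ∀ j, 0 < j → j < n → j ∉ J → HW j (colWord M) := by
    apply forall_congr'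
    intro j
    exact imp_congr Iff.rfl (imp_congr Iff.rfl (imp_congr Iff.rfl (ecol_eq_none_iff j M)))
  rw [hrow, hcol, isKLR_iff_hw hI (rowWord M), isKLR_iff_hw hJ (colWord M)]
end
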